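/- arXiv:1009.0479 — 12 statements merged into one kernel-verified Lean document; each statement's English description precedes it below -/
import Mathlib

section
/- Let f and g be elements of k[X_1,…,X_N]. Assume that g is a residual normal crossing relative to a totally ordered subset (J_1, ≤_1) of the variables, and that the evaluation f̄ of f at X_j = 0 for all X_j ∈ J_1 is a residual normal crossing relative to a totally ordered subset (J_2, ≤_2) of the variables. Then J_1 and J_2 are disjoint, and the product f·g is a residual normal crossing relative to the union J_1 ∪ J_2 equipped with the total order ≤_{1,2} defined by: X_a ≤_{1,2} X_b if and only if (X_a, X_b ∈ J_1 and X_a ≤_1 X_b), or (X_a, X_b ∈ J_2 and X_a ≤_2 X_b), or (X_a ∈ J_1 and X_b ∈ J_2). -/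
open MvPolynomial

/-- Evaluation of a multivariate polynomial at `X j = 0` (all other variables kept). -/
noncomputable def setZero {σ : Type*} [DecidableEq σ] {k : Type*} [Field k] (j : σ) :
    MvPolynomial σ k →ₐ[k] MvPolynomial σ k :=
  aeval (fun i => if i = j then 0 else X i)

/-- `IsRNC g J` : `g` is a residual normal crossing relative to the totally ordered
subset of variables given by the (nodup) list `J`, listed in increasing order. -/
def IsRNC {σ : Type*} [DecidableEq σ] {k : Type*} [Field k] :
    MvPolynomial σ k → List σ → Prop
  | g, [] => ∃ c : k, c ≠ 0 ∧ g = C c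
  | g, j :: J => ∃ h : MvPolynomial σ k, g = X j * h ∧ IsRNC (setZero j h) J

/-!
Induct on `J₁`. If `g = X j * h` with `j` the least element of `J₁`, then `f * g = X j * (f * h)`
and setting `X j = 0` in `f * h` gives `f̄ * h̄` with `f̄ := f|_{X j = 0}`, `h̄ := h|_{X j = 0}`;
since `h̄` is a residual normal crossing for the rest of `J₁` and setting the remaining variables
of `J₁` to zero in `f̄` is the same as doing so in `f`, the induction hypothesis applies.
Disjointness holds because a residual normal crossing relative to `J` is never fixed by
`X j ↦ 0` for `j ∈ J` (for the least `j` it is sent to `0`, and the substitutions for different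
variables commute), whereas `f` evaluated at `X j = 0` for all `j ∈ J₁` is fixed by these.
-/

section

variable {σ : Type*} [DecidableEq σ] {k : Type*} [Field k]

noncomputable def setZeroList (J : List σ) : MvPolynomial σ k →ₐ[k] MvPolynomial σ k :=
  aeval (fun i => if i ∈ J then 0 else X i)

lemma setZeroList_nil : setZeroList (k := k) ([] : List σ) = AlgHom.id k _ := by
  apply algHom_ext
  simp [setZeroList]

lemma setZeroList_cons (j : σ) (J : List σ) :
    setZeroList (k := k) (j :: J) = (setZeroList J).comp (setZero j) := by
  apply algHom_ext
  intro a
  simp only [setZeroList, setZero, AlgHom.comp_apply, aeval_X, List.mem_cons]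
  split_ifs <;> simp_all

lemma setZero_setZeroList_of_mem {j : σ} {J : List σ} (hj : j ∈ J) (p : MvPolynomial σ k) :
    setZero j (setZeroList J p) = setZeroList J p := by
  rw [← AlgHom.comp_apply]
  congr 1
  apply algHom_ext
  intro a
  simp only [setZeroList, setZero, AlgHom.comp_apply, aeval_X]
  split_ifs with ha
  · simp
  · simp [show a ≠ j by rintro rfl; exact ha hj]

lemma setZero_comm (i j : σ) (p : MvPolynomial σ k) :
    setZero i (setZero j p) = setZero j (setZero i p) := by
  rw [← AlgHom.comp_apply, ← AlgHom.comp_apply]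
  congr 1
  apply algHom_ext
  intro a
  simp only [AlgHom.comp_apply, setZero, aeval_X]
  split_ifs <;> simp [*]

lemma setZero_X_mul (j : σ) (p : MvPolynomial σ k) : setZero j (X j * p) = 0 := by
  simp [setZero]

lemma IsRNC.ne_zero : ∀ {J : List σ} {p : MvPolynomial σ k}, IsRNC p J → p ≠ 0
  | [], _, ⟨c, hc, hp⟩ => by simp [hp, hc]
  | _ :: _, _, ⟨h, hp, hr⟩ => by
    have hh : h ≠ 0 := fun h0 => hr.ne_zero (by simp [h0])
    simp [hp, X_ne_zero, hh]

lemma IsRNC.mul_C : ∀ {J : List σ} {p : MvPolynomial σ k} {c : k}, IsRNC p J → c ≠ 0 →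
    IsRNC (p * C c) J
  | [], _, c, ⟨c', hc', hp⟩, hc => ⟨c' * c, mul_ne_zero hc' hc, by simp [hp]⟩
  | j :: _, _, c, ⟨h, hp, hr⟩, hc => by
    refine ⟨h * C c, by rw [hp, mul_assoc], ?_⟩
    rw [map_mul, algHom_C, algebraMap_eq]
    exact hr.mul_C hc

lemma IsRNC.setZero_ne_self {j : σ} :
    ∀ {J : List σ} {p : MvPolynomial σ k}, IsRNC p J → j ∈ J → setZero j p ≠ p
  | i :: J, p, hp@⟨h, hph, hr⟩, hj, hfix => by
    by_cases hij : i = j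
    · subst hij
      exact hp.ne_zero (by rw [← hfix, hph, setZero_X_mul])
    · have hj' : j ∈ J := (List.mem_cons.mp hj).resolve_left (Ne.symm hij)
      have hh : setZero j h = h := by
        apply mul_left_cancel₀ (X_ne_zero i)
        rw [hph, map_mul] at hfix
        simpa [setZero, hij] using hfix
      exact hr.setZero_ne_self hj' (by rw [setZero_comm, hh])

lemma disjoint_of_isRNC_setZeroList {J₁ J₂ : List σ} {f : MvPolynomial σ k}
    (hf : IsRNC (setZeroList J₁ f) J₂) : J₁.Disjoint J₂ :=
  fun _ hj₁ hj₂ => hf.setZero_ne_self hj₂ (setZero_setZeroList_of_mem hj₁ f)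

lemma IsRNC.mul_of_setZeroList : ∀ {J₁ J₂ : List σ} {f g : MvPolynomial σ k},
    IsRNC g J₁ → IsRNC (setZeroList J₁ f) J₂ → IsRNC (f * g) (J₁ ++ J₂)
  | [], _, f, _, ⟨c, hc, hgc⟩, hf => by
    rw [setZeroList_nil] at hf
    rw [hgc]
    exact hf.mul_C hc
  | j :: _, _, f, _, ⟨h, hgh, hr⟩, hf => by
    rw [setZeroList_cons] at hf
    refine ⟨f * h, by rw [hgh, mul_left_comm], ?_⟩
    rw [map_mul]
    exact hr.mul_of_setZeroList hf

end

theorem stmt0_general {σ : Type*} [DecidableEq σ] {k : Type*} [Field k]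
    (f g : MvPolynomial σ k) (J1 J2 : List σ)
    (hg : IsRNC g J1)
    (hf : IsRNC (aeval (fun i => if i ∈ J1 then (0 : MvPolynomial σ k) else X i) f) J2) :
    J1.Disjoint J2 ∧ IsRNC (f * g) (J1 ++ J2) :=
  ⟨disjoint_of_isRNC_setZeroList hf, hg.mul_of_setZeroList hf⟩

theorem stmt0 {σ : Type*} [DecidableEq σ] {k : Type*} [Field k]
    (f g : MvPolynomial σ k) (J1 J2 : List σ) (hJ1 : J1.Nodup) (hJ2 : J2.Nodup)
    (hg : IsRNC g J1)
    (hf : IsRNC (aeval (fun i => if i ∈ J1 then (0 : MvPolynomial σ k) else X i) f) J2) :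
    J1.Disjoint J2 ∧ IsRNC (f * g) (J1 ++ J2) :=
  stmt0_general f g J1 J2 hg hf
end

section
/- Let g ∈ k[X_1,…,X_N] be a residual normal crossing relative to a totally ordered subset (J_1, ≤) of the variables. Assume X_j ∉ J_1, let f ∈ k[X_1,…,X_N], and let h = g(X_1,…,X_{j−1}, f, X_{j+1},…,X_N) denote the polynomial obtained from g by substituting f for the variable X_j. Then h is also a residual normal crossing relative to (J_1, ≤). -/
/-! Substituting `f` for `X j` fixes every `X i` with `i ≠ j`, and setting `X i = 0` afterwards
is the same as first setting `X i = 0` in both the polynomial and in `f`, then substituting.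
So each factorisation `g = X i * h` in the recursive definition is carried along, by induction
on the list of variables. -/

open MvPolynomial

theorem setZero_comp_aeval_update {σ : Type*} [DecidableEq σ] {k : Type*} [Field k]
    {i j : σ} (hji : j ≠ i) (f : MvPolynomial σ k) :
    (setZero i).comp (aeval fun m => if m = j then f else X m) =
      (aeval fun m => if m = j then setZero i f else X m).comp (setZero i) := by
  refine algHom_ext fun m => ?_
  by_cases hmj : m = j
  · subst hmj
    simp [setZero, hji]
  · by_cases hmi : m = i <;> simp [setZero, hmj, hmi, Ne.symm hji]

theorem stmt1_general {σ : Type*} [DecidableEq σ] {k : Type*} [Field k]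
    (g f : MvPolynomial σ k) (J1 : List σ)
    (j : σ) (hj : j ∉ J1) (hg : IsRNC g J1) :
    IsRNC (aeval (fun i => if i = j then f else X i) g) J1 := by
  induction J1 generalizing g f with
  | nil =>
    obtain ⟨c, hc, rfl⟩ := hg
    exact ⟨c, hc, by simp⟩
  | cons i J ih =>
    obtain ⟨h, rfl, hh⟩ := hg
    have hji : j ≠ i := fun e => hj (e ▸ List.mem_cons_self)
    refine ⟨aeval (fun m => if m = j then f else X m) h, by simp [Ne.symm hji], ?_⟩
    rw [← AlgHom.comp_apply, setZero_comp_aeval_update hji, AlgHom.comp_apply]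
    exact ih (setZero i h) (setZero i f) (fun hm => hj (List.mem_cons_of_mem _ hm)) hh

theorem stmt1 {σ : Type*} [DecidableEq σ] {k : Type*} [Field k]
    (g f : MvPolynomial σ k) (J1 : List σ) (hJ1 : J1.Nodup)
    (j : σ) (hj : j ∉ J1) (hg : IsRNC g J1) :
    IsRNC (aeval (fun i => if i = j then f else X i) g) J1 :=
  stmt1_general g f J1 j hj hg
end

section
/- Let g ∈ k[X_1,…,X_N] be a residual normal crossing relative to a totally ordered subset (J_1, ≤) of the variables, and let d be a positive integer. Then the monomial ∏_{X_j ∈ J_1} X_j^d appears with nonzero coefficient in g^d. -/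
open MvPolynomial

/-! Induct along `J`, peeling off the variables in order: if `g = X j * h`, the coefficient of
`X j ^ d * X ^ m` in `g ^ d` is the coefficient of `X ^ m` in `h ^ d`, and for `m` free of `X j`
this coefficient is unchanged by setting `X j = 0` in `h`. -/

lemma setZero_X {σ : Type*} [DecidableEq σ] {k : Type*} [Field k] (j i : σ) :
    setZero (k := k) j (X i) = if i = j then 0 else X i :=
  aeval_X _ i

lemma coeff_setZero_of_apply_eq_zero {σ : Type*} [DecidableEq σ] {k : Type*} [Field k] (j : σ)
    (f : MvPolynomial σ k) {m : σ →₀ ℕ} (hm : m j = 0) : coeff m (setZero j f) = coeff m f := by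
  induction f using MvPolynomial.induction_on generalizing m with
  | C a => rw [← algebraMap_eq, AlgHom.commutes]
  | add p q hp hq => rw [map_add, coeff_add, coeff_add, hp hm, hq hm]
  | mul_X p i hp =>
    rw [map_mul, setZero_X]
    split_ifs with hij
    · subst hij
      simp [coeff_mul_X', hm]
    · have hmi : (m - Finsupp.single i 1 : σ →₀ ℕ) j = 0 := by simp [hm]
      simp only [coeff_mul_X', hp hmi]

lemma finset_sum_single_apply_of_notMem {σ : Type*} {s : Finset σ} {j : σ} (hj : j ∉ s) (d : ℕ) :
    (∑ i ∈ s, Finsupp.single i d) j = 0 := by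
  rw [Finsupp.finsetSum_apply]
  exact Finset.sum_eq_zero fun i hi => Finsupp.single_eq_of_ne (by rintro rfl; exact hj hi)

lemma coeff_single_add_X_mul_pow {σ : Type*} {k : Type*} [Field k] (j : σ)
    (h : MvPolynomial σ k) (m : σ →₀ ℕ) (d : ℕ) :
    coeff (Finsupp.single j d + m) ((X j * h) ^ d) = coeff m (h ^ d) := by
  rw [mul_pow, X_pow_eq_monomial, coeff_monomial_mul, one_mul]

theorem stmt2_general {σ : Type*} [DecidableEq σ] {k : Type*} [Field k]
    (g : MvPolynomial σ k) (J1 : List σ) (hJ1 : J1.Nodup)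
    (hg : IsRNC g J1) (d : ℕ) :
    MvPolynomial.coeff (∑ j ∈ J1.toFinset, Finsupp.single j d) (g ^ d) ≠ 0 := by
  induction J1 generalizing g with
  | nil =>
    obtain ⟨c, hc, rfl⟩ := hg
    rw [List.toFinset_nil, Finset.sum_empty, ← map_pow, coeff_C, if_pos rfl]
    exact pow_ne_zero d hc
  | cons j J ih =>
    obtain ⟨h, rfl, hrnc⟩ := hg
    obtain ⟨hj, hJ⟩ := List.nodup_cons.mp hJ1
    have hjJ : j ∉ J.toFinset := List.mem_toFinset.not.mpr hj
    rw [List.toFinset_cons, Finset.sum_insert hjJ, coeff_single_add_X_mul_pow,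
      ← coeff_setZero_of_apply_eq_zero j _ (finset_sum_single_apply_of_notMem hjJ d), map_pow]
    exact ih _ hJ hrnc

theorem stmt2 {σ : Type*} [DecidableEq σ] {k : Type*} [Field k]
    (g : MvPolynomial σ k) (J1 : List σ) (hJ1 : J1.Nodup)
    (hg : IsRNC g J1) (d : ℕ) (hd : 0 < d) :
    MvPolynomial.coeff (∑ j ∈ J1.toFinset, Finsupp.single j d) (g ^ d) ≠ 0 :=
  stmt2_general g J1 hJ1 hg d
end

section
/- For each 1 ≤ r ≤ n, the polynomial 𝔣_r is a residual normal crossing relative to the subset {Z_{i,j} : 1 ≤ j < i ≤ n, i + j ≤ r + 1} of the variables, equipped with the order: Z_{i,j} ≤ Z_{i',j'} iff i+j < i'+j', or i+j = i'+j' and i ≤ i'. -/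
open MvPolynomial

/-- The `(i,j)` entry (1-based indices) of the generic lower unitriangular matrix `Z`,
as a polynomial in the variables `Z_{i,j}`, `j < i` (indexed by the pair `(i,j)`). -/
noncomputable def Zent (k : Type*) [Field k] (i j : ℕ) : MvPolynomial (ℕ × ℕ) k :=
  if i = j then 1 else if j < i then X (i, j) else 0

/-- The minor `v_a` of the generic lower unitriangular matrix with rows the (1-based)
sequence `a` and columns `1, …, s`. -/
noncomputable def vminor (k : Type*) [Field k] {s : ℕ} (a : Fin s → ℕ) :
    MvPolynomial (ℕ × ℕ) k :=
  (Matrix.of fun p q : Fin s => Zent k (a p) ((q : ℕ) + 1)).det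

/-- The polynomial `𝔣_r = ∏_{s=1}^{r} v_{(⌊s/2⌋+1, …, s)}`. -/
noncomputable def fRNC (k : Type*) [Field k] (r : ℕ) : MvPolynomial (ℕ × ℕ) k :=
  ∏ s ∈ Finset.Icc 1 r, vminor k (fun p : Fin (s - s / 2) => s / 2 + 1 + (p : ℕ))

/-- The polynomial `𝔤_r = σ(𝔣_r)`, where `σ` is the variable substitution
`Z_{i,j} ↦ Z_{n+1-j, n+1-i}`. -/
noncomputable def gRNC (k : Type*) [Field k] (n r : ℕ) : MvPolynomial (ℕ × ℕ) k :=
  rename (fun p : ℕ × ℕ => (n + 1 - p.2, n + 1 - p.1)) (fRNC k r)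

/-- The (strict part of the) order on the variables `Z_{i,j}` :
`Z_{i,j} < Z_{i',j'}` iff `i+j < i'+j'`, or `i+j = i'+j'` and `i < i'`. -/
def zord : ℕ × ℕ → ℕ × ℕ → Prop :=
  fun p q => p.1 + p.2 < q.1 + q.2 ∨ (p.1 + p.2 = q.1 + q.2 ∧ p.1 < q.1)

/-!
Let `Φ_t` set to zero the variables `Z_{i,j}` with `i + j ≤ t`. After `Φ_t`, the minor
`v_t = v_{(⌊t/2⌋+1, …, t)}` vanishes above its antidiagonal, whose entries are the variables with
`i + j = t + 1` (and a `1` when `t` is odd); so `Φ_t(v_t)` is a nonzero constant times the product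
of those variables. Peeling them off `∏_{s ≥ t} Φ_t(v_s)` one at a time, each time setting the
peeled variable to zero, leaves `∏_{s > t} Φ_{t+1}(v_s)` up to a constant, and induction on `t`,
starting from `Φ_1 = id`, gives the claim.
-/

namespace MvPolynomial

section killVars

variable {σ R : Type*} [CommSemiring R]

open Classical in
noncomputable def killVars (P : σ → Prop) : MvPolynomial σ R →ₐ[R] MvPolynomial σ R :=
  aeval fun i => if P i then 0 else X i

variable {P Q : σ → Prop}

theorem killVars_X_of_pos {i : σ} (h : P i) : killVars (R := R) P (X i) = 0 := by
  simp [killVars, h]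

theorem killVars_X_of_neg {i : σ} (h : ¬P i) : killVars (R := R) P (X i) = X i := by
  simp [killVars, h]

theorem killVars_congr (h : ∀ i, P i ↔ Q i) : killVars (R := R) P = killVars Q := by
  obtain rfl : P = Q := _root_.funext fun i => propext (h i)
  rfl

theorem killVars_comp_killVars :
    (killVars (R := R) Q).comp (killVars P) = killVars fun i => P i ∨ Q i := by
  refine algHom_ext fun i => ?_
  rw [AlgHom.comp_apply]
  by_cases hP : P i
  · rw [killVars_X_of_pos hP, map_zero, killVars_X_of_pos (P := fun i => P i ∨ Q i) (.inl hP)]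
  by_cases hQ : Q i
  · rw [killVars_X_of_neg hP, killVars_X_of_pos hQ,
      killVars_X_of_pos (P := fun i => P i ∨ Q i) (.inr hQ)]
  · rw [killVars_X_of_neg hP, killVars_X_of_neg hQ,
      killVars_X_of_neg (P := fun i => P i ∨ Q i) (by tauto)]

theorem killVars_eq_id (h : ∀ i, ¬P i) : killVars (R := R) P = AlgHom.id R _ :=
  algHom_ext fun i => killVars_X_of_neg (h i)

theorem killVars_list_prod_X {M : List σ} (h : ∀ i ∈ M, ¬P i) :
    killVars (R := R) P (M.map X).prod = (M.map X).prod := by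
  rw [map_list_prod, List.map_map]
  exact congrArg List.prod (List.map_congr_left fun i hi => killVars_X_of_neg (h i hi))

end killVars

end MvPolynomial

section IsRNC

variable {σ k : Type*} [DecidableEq σ] [Field k]

theorem setZero_eq_killVars (j : σ) : setZero (k := k) j = killVars (· = j) :=
  algHom_ext fun i => by
    by_cases h : i = j
    · rw [killVars_X_of_pos (P := (· = j)) h]; simp [setZero, h]
    · rw [killVars_X_of_neg (P := (· = j)) h]; simp [setZero, h]

theorem IsRNC.const_mul {c : k} (hc : c ≠ 0) :
    ∀ {g : MvPolynomial σ k} {L : List σ}, IsRNC g L → IsRNC (C c * g) L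
  | _, [], ⟨d, hd, hg⟩ => ⟨c * d, mul_ne_zero hc hd, by rw [hg, MvPolynomial.C_mul]⟩
  | _, _ :: _, ⟨h, hg, hh⟩ => ⟨C c * h, by rw [hg, mul_left_comm], by
      rw [map_mul, setZero, aeval_C, algebraMap_eq]
      exact hh.const_mul hc⟩

theorem IsRNC.list_prod_X_mul {L : List σ} :
    ∀ {M : List σ} {g : MvPolynomial σ k}, M.Nodup → IsRNC (killVars (· ∈ M) g) L →
      IsRNC ((M.map X).prod * g) (M ++ L)
  | [], g, _, h => by simpa [killVars_eq_id] using h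
  | j :: M, g, hM, h => by
    obtain ⟨hjM, hM⟩ := List.nodup_cons.1 hM
    refine ⟨(M.map X).prod * g, by rw [List.map_cons, List.prod_cons, mul_assoc], ?_⟩
    rw [map_mul, setZero_eq_killVars,
      killVars_list_prod_X fun i hi (hij : i = j) => hjM (hij ▸ hi)]
    refine IsRNC.list_prod_X_mul hM ?_
    rw [← AlgHom.comp_apply, killVars_comp_killVars]
    simpa [killVars_congr fun i => (List.mem_cons (a := i) (b := j) (l := M)).symm] using h

end IsRNC

namespace Matrix

variable {R : Type*} [CommRing R] {m : ℕ}

theorem det_eq_sign_revPerm_mul_prod_of_eq_zero_above_antidiagonal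
    (M : Matrix (Fin m) (Fin m) R) (h : ∀ p q : Fin m, (p : ℕ) + q + 1 < m → M p q = 0) :
    M.det = Equiv.Perm.sign (Fin.revPerm : Equiv.Perm (Fin m)) * ∏ p, M p.rev p := by
  have hrev : M = (M.submatrix Fin.revPerm id).submatrix Fin.revPerm id := by
    ext p q; simp
  have htri : (M.submatrix Fin.revPerm id).IsUpperTriangular := fun p q (hqp : q < p) =>
    h _ _ (by simp only [Fin.revPerm_apply, Fin.val_rev, id_eq]; omega)
  rw [hrev, det_permute, det_of_isUpperTriangular htri]
  simp

end Matrix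

instance : Std.Irrefl zord := ⟨fun _ h => by simp only [zord] at h; omega⟩

instance : Std.Antisymm zord := ⟨fun _ _ h₁ h₂ => by simp only [zord] at h₁ h₂; omega⟩

/-- The variables `Z_{i,j}` on the antidiagonal `i + j = t`, in increasing order of `i`. -/
def antidiag (t : ℕ) : List (ℕ × ℕ) :=
  ((List.range ((t - 1) / 2)).map fun d => (t - 1 - d, d + 1)).reverse

theorem mem_antidiag {t : ℕ} {p : ℕ × ℕ} :
    p ∈ antidiag t ↔ 1 ≤ p.2 ∧ p.2 < p.1 ∧ p.1 + p.2 = t := by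
  obtain ⟨i, j⟩ := p
  simp only [antidiag, List.mem_reverse, List.mem_map, List.mem_range, Prod.mk.injEq]
  constructor
  · rintro ⟨d, hd, rfl, rfl⟩; omega
  · rintro ⟨h₁, h₂, h₃⟩; exact ⟨j - 1, by omega, by omega, by omega⟩

theorem pairwise_zord_antidiag (t : ℕ) : (antidiag t).Pairwise zord := by
  rw [antidiag, List.pairwise_reverse]
  refine List.pairwise_map.2 (List.pairwise_lt_range.imp_of_mem fun ha hb hab => ?_)
  rw [List.mem_range] at ha hb
  simp only [zord]; omega

def antidiagVars (a b : ℕ) : List (ℕ × ℕ) :=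
  (List.range' a (b + 1 - a)).flatMap antidiag

theorem mem_antidiagVars {a b : ℕ} {p : ℕ × ℕ} :
    p ∈ antidiagVars a b ↔ 1 ≤ p.2 ∧ p.2 < p.1 ∧ a ≤ p.1 + p.2 ∧ p.1 + p.2 ≤ b := by
  simp only [antidiagVars, List.mem_flatMap, List.mem_range', mem_antidiag]
  constructor
  · rintro ⟨t, ⟨d, hd, rfl⟩, h⟩; omega
  · rintro ⟨h₁, h₂, h₃, h₄⟩; exact ⟨_, ⟨p.1 + p.2 - a, by omega, by omega⟩, h₁, h₂, rfl⟩

theorem pairwise_zord_antidiagVars (a b : ℕ) : (antidiagVars a b).Pairwise zord := by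
  rw [antidiagVars, List.pairwise_flatMap]
  refine ⟨fun t _ => pairwise_zord_antidiag t, ?_⟩
  refine (List.pairwise_lt_range' 1).imp fun hst p hp q hq => ?_
  rw [mem_antidiag] at hp hq
  simp only [zord]; omega

theorem antidiagVars_of_lt {a b : ℕ} (h : b < a) : antidiagVars a b = [] := by
  rw [antidiagVars, show b + 1 - a = 0 by omega, List.range'_zero, List.flatMap_nil]

theorem antidiagVars_of_le {a b : ℕ} (h : a ≤ b) :
    antidiagVars a b = antidiag a ++ antidiagVars (a + 1) b := by
  rw [antidiagVars, antidiagVars, show b + 1 - a = (b + 1 - (a + 1)) + 1 by omega,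
    List.range'_succ, List.flatMap_cons]

section Minors

variable (k : Type*) [Field k]

theorem Zent_self (i : ℕ) : Zent k i i = 1 := if_pos rfl

theorem Zent_of_lt {i j : ℕ} (h : j < i) : Zent k i j = X (i, j) := by
  rw [Zent, if_neg h.ne', if_pos h]

/-- The map `Φ_t`. -/
noncomputable def zeroUpTo (t : ℕ) : MvPolynomial (ℕ × ℕ) k →ₐ[k] MvPolynomial (ℕ × ℕ) k :=
  killVars fun p => 1 ≤ p.2 ∧ p.2 < p.1 ∧ p.1 + p.2 ≤ t

theorem zeroUpTo_one : zeroUpTo k 1 = AlgHom.id k _ :=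
  killVars_eq_id fun _ => by omega

theorem killVars_antidiag_comp_zeroUpTo (t : ℕ) :
    (killVars (· ∈ antidiag (t + 1))).comp (zeroUpTo k t) = zeroUpTo k (t + 1) := by
  rw [zeroUpTo, killVars_comp_killVars, zeroUpTo]
  exact killVars_congr fun p => by rw [mem_antidiag]; omega

variable {k}

theorem zeroUpTo_Zent_of_lt_add {t i j : ℕ} (h : t < i + j) :
    zeroUpTo k t (Zent k i j) = Zent k i j := by
  unfold Zent
  split_ifs with hij hji
  · exact map_one _
  · exact killVars_X_of_neg (by omega)
  · exact map_zero _

theorem zeroUpTo_Zent_of_add_le {t i j : ℕ} (hj : 1 ≤ j) (hji : j < i) (h : i + j ≤ t) :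
    zeroUpTo k t (Zent k i j) = 0 := by
  rw [Zent_of_lt k hji]
  exact killVars_X_of_pos ⟨hj, hji, h⟩

variable (k)

noncomputable def halfMinor (s : ℕ) : MvPolynomial (ℕ × ℕ) k :=
  vminor k fun p : Fin (s - s / 2) => s / 2 + 1 + (p : ℕ)

theorem prod_Zent_eq_antidiag_prod (t : ℕ) :
    ∏ p : Fin (t - t / 2), Zent k (t - p) (p + 1) = ((antidiag (t + 1)).map X).prod := by
  rw [Fin.prod_univ_eq_prod_range (fun p => Zent k (t - p) (p + 1)),
    ← Finset.prod_subset (Finset.range_subset_range.2 (by omega : t / 2 ≤ t - t / 2))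
      fun p hp hp' => by
        simp only [Finset.mem_range] at hp hp'
        rw [show t - p = p + 1 by omega, Zent_self]]
  simp only [antidiag, List.map_reverse, List.prod_reverse, List.map_map,
    Finset.prod_eq_multiset_prod, Finset.range_val, Multiset.range, Multiset.map_coe,
    Multiset.prod_coe, Nat.add_sub_cancel]
  refine congrArg List.prod (List.map_congr_left fun p hp => ?_)
  rw [List.mem_range] at hp
  exact Zent_of_lt k (by omega)

theorem zeroUpTo_halfMinor_self (t : ℕ) :
    ∃ ε : k, ε ≠ 0 ∧ zeroUpTo k t (halfMinor k t) = C ε * ((antidiag (t + 1)).map X).prod := by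
  set σ : Equiv.Perm (Fin (t - t / 2)) := Fin.revPerm
  refine ⟨((Equiv.Perm.sign σ : ℤ) : k), ?_, ?_⟩
  · rcases Int.units_eq_one_or (Equiv.Perm.sign σ) with h | h <;> simp [h]
  rw [halfMinor, vminor, AlgHom.map_det,
    Matrix.det_eq_sign_revPerm_mul_prod_of_eq_zero_above_antidiagonal, map_intCast,
    ← prod_Zent_eq_antidiag_prod]
  · refine congrArg _ (Finset.prod_congr rfl fun p _ => ?_)
    simp only [AlgHom.mapMatrix_apply, Matrix.map_apply, Matrix.of_apply, Fin.val_rev]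
    rw [show t / 2 + 1 + (t - t / 2 - (p + 1)) = t - p by omega]
    exact zeroUpTo_Zent_of_lt_add (by omega)
  · intro p q hpq
    simp only [AlgHom.mapMatrix_apply, Matrix.map_apply, Matrix.of_apply]
    exact zeroUpTo_Zent_of_add_le (by omega) (by omega) (by omega)

theorem isRNC_prod_zeroUpTo_halfMinor (r t : ℕ) :
    IsRNC (∏ s ∈ Finset.Icc t r, zeroUpTo k t (halfMinor k s)) (antidiagVars (t + 1) (r + 1)) := by
  rcases lt_or_ge r t with hrt | htr
  · rw [Finset.Icc_eq_empty_of_lt hrt, Finset.prod_empty, antidiagVars_of_lt (by omega)]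
    exact ⟨1, one_ne_zero, C_1.symm⟩
  obtain ⟨ε, hε, hlead⟩ := zeroUpTo_halfMinor_self k t
  have htail := isRNC_prod_zeroUpTo_halfMinor r (t + 1)
  rw [antidiagVars_of_le (by omega), ← Finset.insert_Icc_add_one_left_eq_Icc htr,
    Finset.prod_insert (by simp), hlead, mul_assoc]
  refine (IsRNC.list_prod_X_mul (pairwise_zord_antidiag _).nodup ?_).const_mul hε
  rwa [map_prod, Finset.prod_congr rfl fun s _ => by
    rw [← AlgHom.comp_apply, killVars_antidiag_comp_zeroUpTo]]
termination_by r + 1 - t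

end Minors

theorem stmt3_general (k : Type*) [Field k] (n r : ℕ) (hrn : r ≤ n)
    (l : List (ℕ × ℕ))
    (hmem : ∀ p : ℕ × ℕ, p ∈ l ↔ 1 ≤ p.2 ∧ p.2 < p.1 ∧ p.1 ≤ n ∧ p.1 + p.2 ≤ r + 1)
    (hsort : l.Pairwise zord) :
    IsRNC (fRNC k r) l := by
  have hl : l = antidiagVars 2 (r + 1) :=
    hsort.eq_of_mem_iff (pairwise_zord_antidiagVars _ _) fun p => by
      rw [hmem, mem_antidiagVars]; omega
  have hf : fRNC k r = ∏ s ∈ Finset.Icc 1 r, zeroUpTo k 1 (halfMinor k s) := by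
    simp only [zeroUpTo_one, AlgHom.id_apply, fRNC, halfMinor]
  rw [hl, hf]
  exact isRNC_prod_zeroUpTo_halfMinor k r 1

theorem stmt3 (k : Type*) [Field k] (n r : ℕ) (hr1 : 1 ≤ r) (hrn : r ≤ n)
    (l : List (ℕ × ℕ))
    (hmem : ∀ p : ℕ × ℕ, p ∈ l ↔ 1 ≤ p.2 ∧ p.2 < p.1 ∧ p.1 ≤ n ∧ p.1 + p.2 ≤ r + 1)
    (hsort : l.Pairwise zord) :
    IsRNC (fRNC k r) l :=
  stmt3_general k n r hrn l hmem hsort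
end

section
/- There exists a total order on the full set of variables {Z_{i,j} : 1 ≤ j < i ≤ n} such that the product 𝔣_n · 𝔤_{n−1} is a residual normal crossing relative to this totally ordered set of all the variables. -/
open MvPolynomial

/-!
Order the variables lexicographically by `(i, j)`. If a polynomial involves only the variables
of a sorted list `J` and its lexicographically lowest term (smaller variables being more
significant) is `∏_{a ∈ J} X a`, then it is a residual normal crossing relative to `J`: every
monomial is divisible by the least variable `j`, and after dividing by `X j` and setting `X j = 0`
the surviving monomials are those whose lowest term is `∏_{a ∈ J, a ≠ j} X a`.

Lowest terms are multiplicative. The lowest term of a minor of `Z` with consecutive rows and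
columns is its anti-diagonal term, and `σ` maps such a minor to another one (reflecting it in the
anti-diagonal of `Z`). The anti-diagonals of the factors of `𝔣_n` are the lines `i + j = s + 1`,
`1 ≤ s ≤ n`, and those of `𝔤_{n-1}` the lines `i + j = 2n + 1 - s`, `1 ≤ s ≤ n - 1`, so together
they contain every variable `Z_{i,j}` exactly once.
-/

namespace Finsupp

variable {σ : Type*} {r : σ → σ → Prop} {x y z w : σ →₀ ℕ}

theorem not_lex_self : ¬ Finsupp.Lex r (· < ·) x x := by
  rintro ⟨a, -, h⟩
  exact lt_irrefl _ h

theorem lex_add_left_iff :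
    Finsupp.Lex r (· < ·) (z + x) (z + y) ↔ Finsupp.Lex r (· < ·) x y := by
  simp only [lex_def, coe_add, Pi.add_apply, add_right_inj, add_lt_add_iff_left]

theorem lex_add_right_iff :
    Finsupp.Lex r (· < ·) (x + z) (y + z) ↔ Finsupp.Lex r (· < ·) x y := by
  simp only [add_comm _ z, lex_add_left_iff]

theorem lex_add_add [IsStrictTotalOrder σ r] (hxy : Finsupp.Lex r (· < ·) x y)
    (hzw : Finsupp.Lex r (· < ·) z w) : Finsupp.Lex r (· < ·) (x + z) (y + w) := by
  obtain ⟨a, ha, hxya⟩ := lex_def.1 hxy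
  obtain ⟨b, hb, hzwb⟩ := lex_def.1 hzw
  rcases trichotomous_of r a b with hab | rfl | hba
  · refine lex_def.2 ⟨a, fun d hd => ?_, ?_⟩
    · simp only [coe_add, Pi.add_apply, ha d hd, hb d (_root_.trans hd hab)]
    · simpa only [coe_add, Pi.add_apply, hb a hab, add_lt_add_iff_right] using hxya
  · refine lex_def.2 ⟨a, fun d hd => ?_, ?_⟩
    · simp only [coe_add, Pi.add_apply, ha d hd, hb d hd]
    · simpa only [coe_add, Pi.add_apply] using add_lt_add hxya hzwb
  · refine lex_def.2 ⟨b, fun d hd => ?_, ?_⟩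
    · simp only [coe_add, Pi.add_apply, hb d hd, ha d (_root_.trans hd hba)]
    · simpa only [coe_add, Pi.add_apply, ha b hba, add_lt_add_iff_left] using hzwb

end Finsupp

section IsLexLowest

variable {σ R : Type*} [CommSemiring R] (r : σ → σ → Prop)

/-- `m` is the exponent of the lowest term of `f` in the lexicographic order on monomials in which
the variables that are smaller for `r` are the more significant ones. -/
def IsLexLowest (f : MvPolynomial σ R) (m : σ →₀ ℕ) : Prop :=
  coeff m f ≠ 0 ∧ ∀ m' ∈ f.support, m' ≠ m → Finsupp.Lex r (· < ·) m m'

variable {r}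

theorem isLexLowest_sum_monomial {ι : Type*} {t : Finset ι} {d : ι → σ →₀ ℕ} {c : ι → R}
    {i₀ : ι} (hi₀ : i₀ ∈ t) (hc : c i₀ ≠ 0)
    (hd : ∀ i ∈ t, i ≠ i₀ → Finsupp.Lex r (· < ·) (d i₀) (d i)) :
    IsLexLowest r (∑ i ∈ t, monomial (d i) (c i)) (d i₀) := by
  classical
  refine ⟨?_, fun m hm hm₀ => ?_⟩
  · rw [coeff_sum, Finset.sum_eq_single_of_mem i₀ hi₀ fun i hi hne => ?_, coeff_monomial,
      if_pos rfl]
    · exact hc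
    · rw [coeff_monomial, if_neg fun h => Finsupp.not_lex_self (h ▸ hd i hi hne)]
  · rw [mem_support_iff, coeff_sum] at hm
    obtain ⟨i, hi, hci⟩ := Finset.exists_ne_zero_of_sum_ne_zero hm
    obtain rfl : d i = m := by
      by_contra h
      exact hci (by rw [coeff_monomial, if_neg h])
    exact hd i hi fun h => hm₀ (h ▸ rfl)

theorem IsLexLowest.one [Nontrivial R] : IsLexLowest r (1 : MvPolynomial σ R) 0 :=
  ⟨by simp, fun m hm h => absurd (by simpa using hm) h⟩

theorem IsLexLowest.mul [NoZeroDivisors R] [IsStrictTotalOrder σ r] {f g : MvPolynomial σ R}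
    {m m' : σ →₀ ℕ} (hf : IsLexLowest r f m) (hg : IsLexLowest r g m') :
    IsLexLowest r (f * g) (m + m') := by
  classical
  have key : ∀ a ∈ f.support, ∀ b ∈ g.support, (a, b) ≠ (m, m') →
      Finsupp.Lex r (· < ·) (m + m') (a + b) := by
    intro a ha b hb hab
    by_cases ham : a = m
    · subst ham
      exact Finsupp.lex_add_left_iff.2 (hg.2 b hb fun h => hab (h ▸ rfl))
    by_cases hbm : b = m'
    · subst hbm
      exact Finsupp.lex_add_right_iff.2 (hf.2 a ha ham)
    exact Finsupp.lex_add_add (hf.2 a ha ham) (hg.2 b hb hbm)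
  refine ⟨?_, fun m'' hm'' hne => ?_⟩
  · rw [coeff_mul,
      Finset.sum_eq_single_of_mem (m, m') (Finset.HasAntidiagonal.mem_antidiagonal.2 rfl)]
    · exact mul_ne_zero hf.1 hg.1
    rintro ⟨a, b⟩ hab hne
    by_contra h
    have := key a (mem_support_iff.2 (left_ne_zero_of_mul h)) b
      (mem_support_iff.2 (right_ne_zero_of_mul h)) hne
    rw [Finset.HasAntidiagonal.mem_antidiagonal.1 hab] at this
    exact Finsupp.not_lex_self this
  · obtain ⟨a, ha, b, hb, rfl⟩ := Finset.mem_add.1 (support_mul f g hm'')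
    exact key a ha b hb fun h => hne (by simp_all)

theorem IsLexLowest.prod [NoZeroDivisors R] [Nontrivial R] [IsStrictTotalOrder σ r] {ι : Type*}
    (t : Finset ι) {F : ι → MvPolynomial σ R} {M : ι → σ →₀ ℕ}
    (h : ∀ i ∈ t, IsLexLowest r (F i) (M i)) :
    IsLexLowest r (∏ i ∈ t, F i) (∑ i ∈ t, M i) := by
  induction t using Finset.cons_induction with
  | empty => simpa using IsLexLowest.one
  | cons a t ha ih =>
    rw [Finset.prod_cons, Finset.sum_cons]
    exact (h a (Finset.mem_cons_self a t)).mul (ih fun i hi => h i (Finset.mem_cons_of_mem hi))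

end IsLexLowest

theorem mem_supported_iff_forall_mem_support {σ R : Type*} [CommSemiring R]
    {p : MvPolynomial σ R} {s : Set σ} :
    p ∈ supported R s ↔ ∀ m ∈ p.support, ∀ a ∈ m.support, a ∈ s := by
  simp only [mem_supported, Set.subset_def, Finset.mem_coe, mem_vars_iff_mem_support]
  exact ⟨fun h m hm a ha => h a ⟨m, hm, ha⟩, fun h a ⟨m, hm, ha⟩ => h m hm a ha⟩

theorem Multiset.toFinsupp_cons {α : Type*} [DecidableEq α] (a : α) (s : Multiset α) :
    Multiset.toFinsupp (a ::ₘ s) = Finsupp.single a 1 + Multiset.toFinsupp s := by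
  rw [← Multiset.singleton_add, Multiset.toFinsupp_add, Multiset.toFinsupp_singleton]

section ResidualNormalCrossing

variable {σ k : Type*} [DecidableEq σ] [Field k]

theorem setZero_monomial (j : σ) (m : σ →₀ ℕ) (c : k) :
    setZero j (monomial m c) = if m j = 0 then monomial m c else 0 := by
  rw [setZero, aeval_monomial, Finsupp.prod]
  split_ifs with h
  · have hX : ∀ i ∈ m.support, (if i = j then 0 else X i : MvPolynomial σ k) ^ m i = X i ^ m i :=
      fun i hi => by rw [if_neg fun hij : i = j => Finsupp.mem_support_iff.1 hi (hij ▸ h)]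
    rw [Finset.prod_congr rfl hX, ← Finsupp.prod, algebraMap_eq, ← monomial_eq]
  · rw [Finset.prod_eq_zero (Finsupp.mem_support_iff.2 h) (by simp [h]), mul_zero]

theorem coeff_setZero (j : σ) (p : MvPolynomial σ k) (u : σ →₀ ℕ) :
    coeff u (setZero j p) = if u j = 0 then coeff u p else 0 := by
  induction p using MvPolynomial.induction_on' with
  | monomial m c =>
    rw [setZero_monomial]
    by_cases hm : m = u
    · subst hm
      split_ifs <;> simp
    · split_ifs <;> simp [coeff_monomial, hm]
  | add p q hp hq => rw [map_add, coeff_add, hp, hq, coeff_add]; split_ifs <;> simp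

theorem mem_support_of_mem_support_setZero_divMonomial {j : σ} {f : MvPolynomial σ k}
    {u : σ →₀ ℕ} (hu : u ∈ (setZero j (f.divMonomial (Finsupp.single j 1))).support) :
    u j = 0 ∧ Finsupp.single j 1 + u ∈ f.support := by
  rw [mem_support_iff, coeff_setZero, coeff_divMonomial] at hu
  split_ifs at hu with hu₀
  · exact ⟨hu₀, mem_support_iff.2 hu⟩
  · exact absurd rfl hu

theorem setZero_divMonomial_mem_supported {j : σ} {J : List σ} {f : MvPolynomial σ k}
    (hf : f ∈ supported k {a | a ∈ j :: J}) :
    setZero j (f.divMonomial (Finsupp.single j 1)) ∈ supported k {a | a ∈ J} := by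
  refine mem_supported_iff_forall_mem_support.2 fun u hu a ha => ?_
  obtain ⟨hu₀, hmem⟩ := mem_support_of_mem_support_setZero_divMonomial hu
  have ha' : a ∈ (Finsupp.single j 1 + u).support := by
    simp only [Finsupp.mem_support_iff, Finsupp.coe_add, Pi.add_apply] at ha ⊢
    omega
  rcases List.mem_cons.1 (mem_supported_iff_forall_mem_support.1 hf _ hmem a ha') with rfl | haJ
  · exact absurd hu₀ (Finsupp.mem_support_iff.1 ha)
  · exact haJ

variable {r : σ → σ → Prop}

theorem IsLexLowest.setZero_divMonomial {j : σ} {J : List σ} (hjJ : j ∉ J)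
    {f : MvPolynomial σ k} (hf : IsLexLowest r f (Multiset.toFinsupp ↑(j :: J))) :
    IsLexLowest r (setZero j (f.divMonomial (Finsupp.single j 1))) (Multiset.toFinsupp ↑J) := by
  rw [← Multiset.cons_coe, Multiset.toFinsupp_cons] at hf
  refine ⟨?_, fun u hu hne => ?_⟩
  · rw [coeff_setZero, if_pos (by simpa [List.count_eq_zero] using hjJ), coeff_divMonomial]
    exact hf.1
  · obtain ⟨-, hmem⟩ := mem_support_of_mem_support_setZero_divMonomial hu
    exact Finsupp.lex_add_left_iff.1 (hf.2 _ hmem fun h => hne (add_left_cancel h))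

variable [IsStrictTotalOrder σ r]

theorem eq_X_mul_divMonomial_of_isLexLowest {j : σ} {J : List σ} (hj : ∀ a ∈ J, r j a)
    {f : MvPolynomial σ k} (hsupp : f ∈ supported k {a | a ∈ j :: J})
    (hf : IsLexLowest r f (Multiset.toFinsupp ↑(j :: J))) :
    f = X j * f.divMonomial (Finsupp.single j 1) := by
  have hj₀ : Multiset.toFinsupp ↑(j :: J) j ≠ 0 := by simp
  -- the first exponent in which a monomial exceeds the lowest term cannot precede `j`
  have hdvd : ∀ m ∈ f.support, m j ≠ 0 := by
    intro m hm
    rcases eq_or_ne m (Multiset.toFinsupp ↑(j :: J)) with rfl | hne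
    · exact hj₀
    obtain ⟨a, ha, hlt⟩ := Finsupp.lex_def.1 (hf.2 m hm hne)
    rcases trichotomous_of r a j with haj | rfl | hja
    · rcases List.mem_cons.1 (mem_supported_iff_forall_mem_support.1 hsupp m hm a
        (Finsupp.mem_support_iff.2 (by omega))) with rfl | haJ
      · exact absurd haj (irrefl a)
      · exact absurd (hj a haJ) (asymm haj)
    · omega
    · exact ha j hja ▸ hj₀
  have hmod : f.modMonomial (Finsupp.single j 1) = 0 := by
    ext u
    rw [coeff_zero]
    by_cases hu : Finsupp.single j 1 ≤ u
    · exact coeff_modMonomial_of_le f hu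
    · rw [coeff_modMonomial_of_not_le f hu]
      by_contra hne
      exact hu (Finsupp.single_le_iff.2 (Nat.one_le_iff_ne_zero.2 (hdvd u (mem_support_iff.2 hne))))
  simpa [hmod] using (divMonomial_add_modMonomial_single f j).symm

theorem isRNC_of_isLexLowest {J : List σ} (hJ : J.Pairwise r) {f : MvPolynomial σ k}
    (hsupp : f ∈ supported k {a | a ∈ J}) (hf : IsLexLowest r f (Multiset.toFinsupp J)) :
    IsRNC f J := by
  induction J generalizing f with
  | nil =>
    have : f ∈ (⊥ : Subalgebra k (MvPolynomial σ k)) := by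
      simpa [← supported_empty] using hsupp
    obtain ⟨c, rfl⟩ := Algebra.mem_bot.1 this
    exact ⟨c, by simpa using hf.1, rfl⟩
  | cons j J ih =>
    obtain ⟨hj, hJ⟩ := List.pairwise_cons.1 hJ
    exact ⟨_, eq_X_mul_divMonomial_of_isLexLowest hj hsupp hf,
      ih hJ (setZero_divMonomial_mem_supported hsupp)
        (hf.setZero_divMonomial fun h => irrefl j (hj j h))⟩

end ResidualNormalCrossing

local notation "lexPair" => Prod.Lex (α := ℕ) (β := ℕ) (· < ·) (· < ·)

section MinorsOfZ

variable {k : Type*} [Field k] {s : ℕ}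

noncomputable def entryExponent (i j : ℕ) : ℕ × ℕ →₀ ℕ :=
  if i = j then 0 else Finsupp.single (i, j) 1

theorem zent_eq_monomial {i j : ℕ} (h : j ≤ i) :
    Zent k i j = monomial (entryExponent i j) 1 := by
  unfold Zent entryExponent
  split_ifs with hij
  · rfl
  · rfl
  · omega

theorem entryExponent_apply_of_ne {i j : ℕ} {a : ℕ × ℕ} (h : (i, j) ≠ a) :
    entryExponent i j a = 0 := by
  unfold entryExponent
  split_ifs <;> simp [h]

theorem entryExponent_apply_self {i j : ℕ} (h : i ≠ j) : entryExponent i j (i, j) = 1 := by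
  simp [entryExponent, h]

noncomputable def permExponent (row col : Fin s → ℕ) (τ : Equiv.Perm (Fin s)) : ℕ × ℕ →₀ ℕ :=
  ∑ p, entryExponent (row p) (col (τ p))

theorem det_zent_eq_sum {row col : Fin s → ℕ} (hCR : ∀ p q, col q ≤ row p) :
    (Matrix.of fun p q => Zent k (row p) (col q)).det =
      ∑ τ : Equiv.Perm (Fin s),
        monomial (permExponent row col τ) ((Equiv.Perm.sign τ : ℤ) : k) := by
  rw [← Matrix.det_transpose, Matrix.det_apply']
  refine Finset.sum_congr rfl fun τ _ => ?_
  simp only [Matrix.transpose_apply, Matrix.of_apply]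
  rw [Finset.prod_congr rfl fun p _ => zent_eq_monomial (hCR p (τ p)), ← monomial_sum_one,
    ← map_intCast (MvPolynomial.C : k →+* MvPolynomial (ℕ × ℕ) k), C_mul_monomial, mul_one]
  rfl

theorem permExponent_apply {row col : Fin s → ℕ} (hrow : Function.Injective row)
    (τ : Equiv.Perm (Fin s)) (i j : ℕ) :
    permExponent row col τ (i, j) =
      if ∃ p, row p = i ∧ col (τ p) = j ∧ i ≠ j then 1 else 0 := by
  simp only [permExponent, Finsupp.finsetSum_apply]
  split_ifs with h
  · obtain ⟨p, rfl, rfl, hne⟩ := h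
    rw [Finset.sum_eq_single p (fun q _ hq => entryExponent_apply_of_ne
      fun h => hq (hrow (congrArg Prod.fst h))) (by simp), entryExponent_apply_self hne]
  · refine Finset.sum_eq_zero fun p _ => ?_
    by_cases hp : (row p, col (τ p)) = (i, j)
    · simp only [Prod.ext_iff] at hp
      rw [entryExponent, if_pos (by_contra fun hne => h ⟨p, hp.1, hp.2, hp.1 ▸ hp.2 ▸ hne⟩)]
      rfl
    · exact entryExponent_apply_of_ne hp

theorem exists_apply_lt_rev_of_ne_revPerm {τ : Equiv.Perm (Fin s)} (hτ : τ ≠ Fin.revPerm) :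
    ∃ p₀, (∀ p < p₀, τ p = p.rev) ∧ τ p₀ < p₀.rev := by
  obtain ⟨p₀, hp₀, hmin⟩ := WellFounded.has_min wellFounded_lt {p | τ p ≠ Fin.revPerm p} <| by
    by_contra h
    exact hτ (Equiv.ext fun p => by_contra fun hp => h ⟨p, hp⟩)
  have hmin' : ∀ p < p₀, τ p = p.rev := fun p hp => by_contra fun h => hmin p h hp
  refine ⟨p₀, hmin', lt_of_le_of_ne (not_lt.1 fun h => ?_) hp₀⟩
  -- below `p₀` the permutation `τ` already takes every value above `p₀.rev`
  have hq : (τ p₀).rev < p₀ := by simpa using Fin.rev_lt_rev.2 h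
  exact hq.ne (τ.injective (by simpa using hmin' _ hq))

theorem permExponent_revPerm_lex {row col : Fin s → ℕ} (hR : StrictMono row)
    (hC : StrictMono col) (hCR : ∀ p q, col q ≤ row p) {τ : Equiv.Perm (Fin s)}
    (hτ : τ ≠ Fin.revPerm) :
    Finsupp.Lex lexPair (· < ·) (permExponent row col Fin.revPerm) (permExponent row col τ) := by
  obtain ⟨p₀, hmin, hlt⟩ := exists_apply_lt_rev_of_ne_revPerm hτ
  have hCτ : col (τ p₀) < col p₀.rev := hC hlt
  -- the exponents first differ at the entry `(row p₀, col (τ p₀))`, used by `τ` but not by the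
  -- reversal
  refine Finsupp.lex_def.2 ⟨(row p₀, col (τ p₀)), fun d hd => ?_, ?_⟩
  · simp only [permExponent, Finsupp.finsetSum_apply]
    refine Finset.sum_congr rfl fun p _ => ?_
    rcases lt_or_ge p p₀ with hp | hp
    · rw [Fin.revPerm_apply, hmin p hp]
    have hne : ∀ c, (p = p₀ → col (τ p₀) ≤ c) → (row p, c) ≠ d := by
      rintro c hc rfl
      rcases Prod.lex_iff.1 hd with h | ⟨h, h'⟩
      · exact (hR.monotone hp).not_gt h
      · exact (hc (hR.injective h)).not_gt h'
    rw [entryExponent_apply_of_ne (hne _ (by rintro rfl; exact hCτ.le)),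
      entryExponent_apply_of_ne (hne _ (by rintro rfl; rfl))]
  · have hzero : permExponent row col Fin.revPerm (row p₀, col (τ p₀)) = 0 := by
      simp only [permExponent, Finsupp.finsetSum_apply]
      refine Finset.sum_eq_zero fun p _ => entryExponent_apply_of_ne fun h => ?_
      obtain rfl := hR.injective (congrArg Prod.fst h)
      exact hCτ.ne' (congrArg Prod.snd h)
    rw [hzero]
    simp only [permExponent, Finsupp.finsetSum_apply]
    refine lt_of_lt_of_le ?_
      (Finset.single_le_sum (fun _ _ => Nat.zero_le _) (Finset.mem_univ p₀))
    rw [entryExponent_apply_self ((hCτ.trans_le (hCR _ _)).ne')]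
    exact one_pos

theorem isLexLowest_det_zent {row col : Fin s → ℕ} (hR : StrictMono row)
    (hC : StrictMono col) (hCR : ∀ p q, col q ≤ row p) :
    IsLexLowest lexPair (Matrix.of fun p q => Zent k (row p) (col q)).det
      (permExponent row col Fin.revPerm) := by
  rw [det_zent_eq_sum hCR]
  refine isLexLowest_sum_monomial (Finset.mem_univ _) ?_
    fun τ _ hτ => permExponent_revPerm_lex hR hC hCR hτ
  rcases Int.units_eq_one_or (Equiv.Perm.sign (Fin.revPerm : Equiv.Perm (Fin s))) with h | h <;>
    simp [h]

theorem zent_mem_supported {S : Set (ℕ × ℕ)} {i j : ℕ} (h : j < i → (i, j) ∈ S) :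
    Zent k i j ∈ supported k S := by
  unfold Zent
  split_ifs with hij hji
  · exact Subalgebra.one_mem _
  · exact X_mem_supported.2 (h hji)
  · exact Subalgebra.zero_mem _

theorem det_zent_mem_supported {row col : Fin s → ℕ} {S : Set (ℕ × ℕ)}
    (h : ∀ p q, col q < row p → (row p, col q) ∈ S) :
    (Matrix.of fun p q => Zent k (row p) (col q)).det ∈ supported k S := by
  rw [Matrix.det_apply']
  exact Subalgebra.sum_mem _ fun τ _ => Subalgebra.mul_mem _ (Subalgebra.intCast_mem _ _)
    (Subalgebra.prod_mem _ fun q _ => zent_mem_supported (h _ _))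

theorem rename_zent (n : ℕ) {i j : ℕ} (hi : i ≤ n) :
    rename (fun a : ℕ × ℕ => (n + 1 - a.2, n + 1 - a.1)) (Zent k i j) =
      Zent k (n + 1 - j) (n + 1 - i) := by
  unfold Zent
  split_ifs <;> first | omega | simp

theorem rename_det_zent (n : ℕ) {row col : Fin s → ℕ} (hrow : ∀ p, row p ≤ n) :
    rename (fun a : ℕ × ℕ => (n + 1 - a.2, n + 1 - a.1))
        (Matrix.of fun p q => Zent k (row p) (col q)).det =
      (Matrix.of fun p q : Fin s => Zent k (n + 1 - col p.rev) (n + 1 - row q.rev)).det := by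
  rw [AlgHom.map_det, ← Matrix.det_transpose, ← Matrix.det_submatrix_equiv_self Fin.revPerm]
  congr 1
  exact Matrix.ext fun p q => by simp [rename_zent n (hrow _)]

end MinorsOfZ

section Factors

variable {k : Type*} [Field k]

-- rows and columns of the minor `v_{(⌊s/2⌋+1, …, s)}` of `Z` and of its image under `σ`
def fRow (s : ℕ) (p : Fin (s - s / 2)) : ℕ := s / 2 + 1 + p

def fCol (s : ℕ) (q : Fin (s - s / 2)) : ℕ := q + 1

def gRow (n s : ℕ) (p : Fin (s - s / 2)) : ℕ := n + 1 - fCol s p.rev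

def gCol (n s : ℕ) (q : Fin (s - s / 2)) : ℕ := n + 1 - fRow s q.rev

theorem permExponent_fRow_fCol_apply (s i j : ℕ) :
    permExponent (fRow s) (fCol s) Fin.revPerm (i, j) =
      if s = i + j - 1 ∧ 1 ≤ j ∧ j < i then 1 else 0 := by
  rw [permExponent_apply fun p q h => Fin.ext (by simpa [fRow] using h)]
  refine if_congr ⟨?_, fun h => ⟨⟨i - s / 2 - 1, by omega⟩, ?_, ?_, by omega⟩⟩ rfl rfl
  · rintro ⟨p, rfl, rfl, hne⟩
    have := p.isLt
    simp only [fRow, fCol, Fin.revPerm_apply, Fin.val_rev] at hne ⊢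
    omega
  · simp only [fRow]
    omega
  · simp only [fCol, Fin.revPerm_apply, Fin.val_rev]
    omega

theorem permExponent_gRow_gCol_apply {n s : ℕ} (hs : s ≤ n) (i j : ℕ) :
    permExponent (gRow n s) (gCol n s) Fin.revPerm (i, j) =
      if s = 2 * n + 1 - (i + j) ∧ j < i ∧ i ≤ n then 1 else 0 := by
  rw [permExponent_apply fun p q h => Fin.ext (by simp [gRow, fCol, Fin.val_rev] at h; omega)]
  refine if_congr ⟨?_, fun h => ⟨⟨i + (s - s / 2) - n - 1, by omega⟩, ?_, ?_, by omega⟩⟩ rfl rfl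
  · rintro ⟨p, rfl, rfl, hne⟩
    have := p.isLt
    simp only [gRow, gCol, fRow, fCol, Fin.revPerm_apply, Fin.val_rev] at hne ⊢
    omega
  · simp only [gRow, fCol, Fin.val_rev]
    omega
  · simp only [gCol, fRow, Fin.revPerm_apply, Fin.rev_rev]
    omega

def lowerIndices (n : ℕ) : Finset (ℕ × ℕ) :=
  (Finset.Icc 1 n ×ˢ Finset.Icc 1 n).filter fun a => a.2 < a.1

theorem mem_lowerIndices {n : ℕ} {a : ℕ × ℕ} :
    a ∈ lowerIndices n ↔ 1 ≤ a.2 ∧ a.2 < a.1 ∧ a.1 ≤ n := by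
  simp only [lowerIndices, Finset.mem_filter, Finset.mem_product, Finset.mem_Icc]
  omega

theorem sum_permExponent_revPerm_eq (n : ℕ) :
    (∑ s ∈ Finset.Icc 1 n, permExponent (fRow s) (fCol s) Fin.revPerm) +
        ∑ s ∈ Finset.Icc 1 (n - 1), permExponent (gRow n s) (gCol n s) Fin.revPerm =
      Multiset.toFinsupp (lowerIndices n).val := by
  ext ⟨i, j⟩
  rw [Finsupp.add_apply, Finsupp.finsetSum_apply, Finsupp.finsetSum_apply,
    Finset.sum_congr rfl fun s _ => permExponent_fRow_fCol_apply s i j,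
    Finset.sum_congr rfl fun s hs => permExponent_gRow_gCol_apply
      (by have := (Finset.mem_Icc.1 hs).2; omega) i j,
    Multiset.toFinsupp_apply, Multiset.count_eq_of_nodup (lowerIndices n).nodup]
  simp only [ite_and, Finset.sum_ite_eq', Finset.mem_Icc, Finset.mem_val, mem_lowerIndices]
  split_ifs <;> omega

theorem vminor_eq_det (s : ℕ) :
    (vminor k fun p : Fin (s - s / 2) => s / 2 + 1 + (p : ℕ)) =
      (Matrix.of fun p q => Zent k (fRow s p) (fCol s q)).det :=
  rfl

theorem isLexLowest_vminor (s : ℕ) :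
    IsLexLowest lexPair (vminor k fun p : Fin (s - s / 2) => s / 2 + 1 + (p : ℕ))
      (permExponent (fRow s) (fCol s) Fin.revPerm) :=
  vminor_eq_det (k := k) s ▸ isLexLowest_det_zent (fun p q h => by simpa [fRow] using h)
    (fun p q h => by simpa [fCol] using h)
    fun p q => by have := q.isLt; simp only [fRow, fCol]; omega

theorem rename_vminor {n s : ℕ} (hs : s ≤ n) :
    rename (fun a : ℕ × ℕ => (n + 1 - a.2, n + 1 - a.1))
        (vminor k fun p : Fin (s - s / 2) => s / 2 + 1 + (p : ℕ)) =
      (Matrix.of fun p q => Zent k (gRow n s p) (gCol n s q)).det :=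
  vminor_eq_det (k := k) s ▸ rename_det_zent n (row := fRow s) fun p => by
    have := p.isLt
    simp only [fRow]
    omega

theorem isLexLowest_rename_vminor {n s : ℕ} (hs : s ≤ n) :
    IsLexLowest lexPair
      (rename (fun a : ℕ × ℕ => (n + 1 - a.2, n + 1 - a.1))
        (vminor k fun p : Fin (s - s / 2) => s / 2 + 1 + (p : ℕ)))
      (permExponent (gRow n s) (gCol n s) Fin.revPerm) := by
  rw [rename_vminor hs]
  refine isLexLowest_det_zent (fun p q h => ?_) (fun p q h => ?_) (fun p q => ?_) <;>
  · have := p.isLt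
    have := q.isLt
    simp only [gRow, gCol, fRow, fCol, Fin.val_rev, Fin.lt_def] at *
    omega

theorem isLexLowest_fRNC_mul_gRNC (n : ℕ) :
    IsLexLowest lexPair (fRNC k n * gRNC k n (n - 1))
      (Multiset.toFinsupp (lowerIndices n).val) := by
  rw [← sum_permExponent_revPerm_eq, gRNC, fRNC, fRNC, map_prod]
  exact (IsLexLowest.prod _ fun s _ => isLexLowest_vminor s).mul <|
    IsLexLowest.prod _ fun s hs => isLexLowest_rename_vminor (by
      have := (Finset.mem_Icc.1 hs).2; omega)

theorem fRNC_mul_gRNC_mem_supported (n : ℕ) :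
    fRNC k n * gRNC k n (n - 1) ∈ supported k ↑(lowerIndices n) := by
  rw [gRNC, fRNC, fRNC, map_prod]
  refine Subalgebra.mul_mem _ (Subalgebra.prod_mem _ fun s hs => ?_)
    (Subalgebra.prod_mem _ fun s hs => ?_)
  · have := (Finset.mem_Icc.1 hs).2
    rw [vminor_eq_det]
    refine det_zent_mem_supported fun p q h => mem_lowerIndices.2 ?_
    have := p.isLt
    simp only [fRow, fCol] at h ⊢
    omega
  · have := (Finset.mem_Icc.1 hs).2
    rw [rename_vminor (by omega)]
    refine det_zent_mem_supported fun p q h => mem_lowerIndices.2 ?_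
    have := q.isLt
    simp only [gRow, gCol, fRow, fCol, Fin.val_rev] at h ⊢
    omega

end Factors

theorem exists_list_pairwise_lex_coe_eq {α β : Type*} [LinearOrder α] [LinearOrder β]
    (s : Finset (α × β)) :
    ∃ l : List (α × β), l.Pairwise (Prod.Lex (· < ·) (· < ·)) ∧ (l : Multiset (α × β)) = s.val :=
  ⟨((s.map toLex.toEmbedding).sort).map ofLex,
    List.pairwise_map.2 (Finset.sortedLT_sort _).pairwise,
    by
      rw [← Multiset.map_coe, Finset.sort_eq, Finset.map_val, Multiset.map_map]
      exact Multiset.map_id _⟩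

theorem stmt6_general (k : Type*) [Field k] (n : ℕ) :
    ∃ l : List (ℕ × ℕ), l.Nodup ∧
      (∀ p : ℕ × ℕ, p ∈ l ↔ 1 ≤ p.2 ∧ p.2 < p.1 ∧ p.1 ≤ n) ∧
      IsRNC (fRNC k n * gRNC k n (n - 1)) l := by
  obtain ⟨l, hsorted, hl⟩ := exists_list_pairwise_lex_coe_eq (lowerIndices n)
  have hmem : ∀ a, a ∈ l ↔ a ∈ lowerIndices n := fun a => by
    rw [← Multiset.mem_coe, hl, Finset.mem_val]
  refine ⟨l, hsorted.nodup, fun a => (hmem a).trans mem_lowerIndices,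
    isRNC_of_isLexLowest hsorted ?_ ?_⟩
  · convert fRNC_mul_gRNC_mem_supported n using 2
    exact Set.ext hmem
  · rw [hl]
    exact isLexLowest_fRNC_mul_gRNC n

theorem stmt6 (k : Type*) [Field k] (n : ℕ) (hn : 2 ≤ n) :
    ∃ l : List (ℕ × ℕ), l.Nodup ∧
      (∀ p : ℕ × ℕ, p ∈ l ↔ 1 ≤ p.2 ∧ p.2 < p.1 ∧ p.1 ≤ n) ∧
      IsRNC (fRNC k n * gRNC k n (n - 1)) l :=
  stmt6_general k n
end

section
/- Let i, j ≥ 0 with i + j ≤ n, let g, h be n×n matrices over R, and let a = (a_1 < ⋯ < a_{i+j}) be an increasing sequence in {1,…,n}. Then det N_{i,j}(g,h;a) = Σ_{γ ∈ Sh_{i,j}} sgn(γ) · m(g; (a_{γ(1)},…,a_{γ(i)})) · m(h; (a_{γ(i+1)},…,a_{γ(i+j)})), where Sh_{i,j} is the set of (i,j)-shuffles, i.e. permutations γ of {1,…,i+j} with γ(1) < γ(2) < ⋯ < γ(i) and γ(i+1) < γ(i+2) < ⋯ < γ(i+j). -/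
open MvPolynomial

/-- The `(i+j) × (i+j)` matrix `N_{i,j}(g,h;a)` whose `(s,t)` entry is `g (a s) t`
for `t < i` (0-based) and `h (a s) (t - i)` for `i ≤ t < i + j`.  (Out-of-range
column indices, which never occur when `i + j ≤ n`, give junk value `0`.) -/
def Nmat {R : Type*} [CommRing R] {n : ℕ} (i j : ℕ)
    (g h : Matrix (Fin n) (Fin n) R) (a : Fin (i + j) → Fin n) :
    Matrix (Fin (i + j)) (Fin (i + j)) R :=
  Matrix.of fun s t =>
    if (t : ℕ) < i then
      (if hi : (t : ℕ) < n then g (a s) ⟨t, hi⟩ else 0)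
    else
      (if hj : (t : ℕ) - i < n then h (a s) ⟨(t : ℕ) - i, hj⟩ else 0)

/-- The minor `m(g;b)` of `g` with rows `b` and columns `1, …, s` (1-based), i.e.
columns `0, …, s-1` (0-based).  (Out-of-range column indices, which never occur
when `s ≤ n`, give junk value `0`.) -/
def minorM {R : Type*} [CommRing R] {n s : ℕ}
    (g : Matrix (Fin n) (Fin n) R) (b : Fin s → Fin n) : R :=
  (Matrix.of fun p q : Fin s =>
    if hq : (q : ℕ) < n then g (b p) ⟨q, hq⟩ else 0).det

/-! Generalized Laplace expansion along the first `i` columns.  Every permutation `σ` of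
`Fin (i + j)` factors uniquely as `γ * (π ⊕ τ)` with `γ` a shuffle and `π`, `τ` permutations of
the two column blocks: `π⁻¹` and `τ⁻¹` are the permutations sorting the values of `σ` on each
block.  Substituting this factorization into the Leibniz formula for the determinant, the sum
over `π` and `τ` for fixed `γ` is the product of the two Leibniz expansions of the minors. -/

open Equiv Equiv.Perm Finset

theorem Tuple.sort_comp_perm_of_strictMono {n : ℕ} {α : Type*} [LinearOrder α] {f : Fin n → α}
    (hf : StrictMono f) (σ : Perm (Fin n)) : Tuple.sort (f ∘ σ) = σ⁻¹ := by
  have h := Tuple.comp_perm_comp_sort_eq_comp_sort (f := f) (σ := σ)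
  rw [Tuple.sort_eq_refl_iff_monotone.2 hf.monotone, Equiv.coe_refl, Function.comp_id,
    Function.comp_assoc] at h
  exact eq_inv_of_mul_eq_one_right (Equiv.ext (congrFun (hf.injective.comp_left h)))

namespace Equiv.Perm

variable {i j : ℕ}

def blockPerm : Perm (Fin i) × Perm (Fin j) →* Perm (Fin (i + j)) :=
  finSumFinEquiv.permCongrHom.toMonoidHom.comp (sumCongrHom (Fin i) (Fin j))

@[simp] theorem blockPerm_castAdd (b : Perm (Fin i) × Perm (Fin j)) (p : Fin i) :
    blockPerm b (Fin.castAdd j p) = Fin.castAdd j (b.1 p) := by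
  simp [blockPerm, Equiv.permCongrHom_coe, Equiv.permCongr_apply, ← finSumFinEquiv_apply_left]

@[simp] theorem blockPerm_natAdd (b : Perm (Fin i) × Perm (Fin j)) (q : Fin j) :
    blockPerm b (Fin.natAdd i q) = Fin.natAdd i (b.2 q) := by
  simp [blockPerm, Equiv.permCongrHom_coe, Equiv.permCongr_apply, ← finSumFinEquiv_apply_right]

@[simp] theorem sign_blockPerm (b : Perm (Fin i) × Perm (Fin j)) :
    sign (blockPerm b) = sign b.1 * sign b.2 := by
  simp [blockPerm, Equiv.permCongrHom_coe, sign_permCongr, sign_sumCongr]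

theorem mul_blockPerm_comp_castAdd (σ : Perm (Fin (i + j))) (b : Perm (Fin i) × Perm (Fin j)) :
    (fun p => (σ * blockPerm b) (Fin.castAdd j p)) = (fun p => σ (Fin.castAdd j p)) ∘ b.1 := by
  ext p; simp

theorem mul_blockPerm_comp_natAdd (σ : Perm (Fin (i + j))) (b : Perm (Fin i) × Perm (Fin j)) :
    (fun q => (σ * blockPerm b) (Fin.natAdd i q)) = (fun q => σ (Fin.natAdd i q)) ∘ b.2 := by
  ext q; simp

def IsShuffle (i j : ℕ) (γ : Perm (Fin (i + j))) : Prop :=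
  StrictMono (fun p : Fin i => γ (Fin.castAdd j p)) ∧
    StrictMono (fun q : Fin j => γ (Fin.natAdd i q))

noncomputable def blockSort (σ : Perm (Fin (i + j))) : Perm (Fin i) × Perm (Fin j) :=
  (Tuple.sort fun p => σ (Fin.castAdd j p), Tuple.sort fun q => σ (Fin.natAdd i q))

theorem isShuffle_mul_blockPerm_blockSort (σ : Perm (Fin (i + j))) :
    IsShuffle i j (σ * blockPerm (blockSort σ)) := by
  rw [IsShuffle, mul_blockPerm_comp_castAdd, mul_blockPerm_comp_natAdd]
  exact ⟨(Tuple.monotone_sort _).strictMono_of_injective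
      (σ.injective.comp (Fin.castAdd_injective i j) |>.comp (Equiv.injective _)),
    (Tuple.monotone_sort _).strictMono_of_injective
      (σ.injective.comp (Fin.natAdd_injective j i) |>.comp (Equiv.injective _))⟩

theorem blockSort_mul_blockPerm {γ : Perm (Fin (i + j))} (hγ : IsShuffle i j γ)
    (b : Perm (Fin i) × Perm (Fin j)) : blockSort (γ * blockPerm b) = b⁻¹ := by
  simp only [blockSort]
  rw [mul_blockPerm_comp_castAdd, mul_blockPerm_comp_natAdd,
    Tuple.sort_comp_perm_of_strictMono hγ.1, Tuple.sort_comp_perm_of_strictMono hγ.2]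
  rfl

noncomputable def shuffleDecomposition :
    Perm (Fin (i + j)) ≃ {γ // IsShuffle i j γ} × (Perm (Fin i) × Perm (Fin j)) where
  toFun σ := (⟨σ * blockPerm (blockSort σ), isShuffle_mul_blockPerm_blockSort σ⟩, (blockSort σ)⁻¹)
  invFun x := x.1 * blockPerm x.2
  left_inv σ := by simp
  right_inv := fun ⟨⟨γ, hγ⟩, b⟩ => by simp [blockSort_mul_blockPerm hγ]

@[simp] theorem shuffleDecomposition_symm_apply
    (x : {γ // IsShuffle i j γ} × (Perm (Fin i) × Perm (Fin j))) :
    shuffleDecomposition.symm x = x.1 * blockPerm x.2 :=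
  rfl

end Equiv.Perm

namespace Matrix

variable {R : Type*} [CommRing R] {i j : ℕ}

theorem det_apply_fin_add (M : Matrix (Fin (i + j)) (Fin (i + j)) R) :
    M.det = ∑ σ : Perm (Fin (i + j)), ((sign σ : ℤ) : R) *
      ((∏ p, M (σ (Fin.castAdd j p)) (Fin.castAdd j p)) *
        ∏ q, M (σ (Fin.natAdd i q)) (Fin.natAdd i q)) := by
  simp_rw [det_apply', Fin.prod_univ_add]

theorem det_eq_sum_isShuffle [DecidablePred (IsShuffle i j)]
    (M : Matrix (Fin (i + j)) (Fin (i + j)) R) :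
    M.det = ∑ γ ∈ univ.filter (IsShuffle i j), ((sign γ : ℤ) : R) *
      (M.submatrix (γ ∘ Fin.castAdd j) (Fin.castAdd j)).det *
      (M.submatrix (γ ∘ Fin.natAdd i) (Fin.natAdd i)).det := by
  rw [sum_subtype (p := IsShuffle i j) (F := inferInstance) _ fun _ => mem_filter_univ _,
    det_apply_fin_add, ← shuffleDecomposition.symm.sum_comp]
  simp only [Fintype.sum_prod_type, det_apply', submatrix_apply, Function.comp_apply,
    Perm.mul_apply, blockPerm_castAdd, blockPerm_natAdd, map_mul, sign_blockPerm, Units.val_mul,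
    Int.cast_mul, shuffleDecomposition_symm_apply]
  refine sum_congr rfl fun γ _ => ?_
  rw [mul_assoc, sum_mul_sum, mul_sum]
  exact sum_congr rfl fun π _ => by rw [mul_sum]; exact sum_congr rfl fun τ _ => by ring

end Matrix

section Nmat

variable {R : Type*} [CommRing R] {n i j : ℕ}

theorem det_Nmat_submatrix_castAdd (g h : Matrix (Fin n) (Fin n) R) (a : Fin (i + j) → Fin n)
    (r : Fin i → Fin (i + j)) :
    ((Nmat i j g h a).submatrix r (Fin.castAdd j)).det = minorM g (a ∘ r) := by
  congr 1
  ext p q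
  simp [Nmat]

theorem det_Nmat_submatrix_natAdd (g h : Matrix (Fin n) (Fin n) R) (a : Fin (i + j) → Fin n)
    (r : Fin j → Fin (i + j)) :
    ((Nmat i j g h a).submatrix r (Fin.natAdd i)).det = minorM h (a ∘ r) := by
  congr 1
  ext p q
  simp [Nmat]

end Nmat

open scoped Classical in
theorem stmt8_general {R : Type*} [CommRing R] {n : ℕ} (i j : ℕ)
    (g h : Matrix (Fin n) (Fin n) R)
    (a : Fin (i + j) → Fin n) :
    (Nmat i j g h a).det =
      ∑ γ ∈ Finset.univ.filter (fun γ : Equiv.Perm (Fin (i + j)) =>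
          StrictMono (fun p : Fin i => γ (Fin.castAdd j p)) ∧
          StrictMono (fun p : Fin j => γ (Fin.natAdd i p))),
        ((Equiv.Perm.sign γ : ℤ) : R) *
          minorM g (fun p : Fin i => a (γ (Fin.castAdd j p))) *
          minorM h (fun p : Fin j => a (γ (Fin.natAdd i p))) := by
  rw [Matrix.det_eq_sum_isShuffle]
  refine sum_congr (by congr) fun γ _ => ?_
  rw [det_Nmat_submatrix_castAdd, det_Nmat_submatrix_natAdd]
  rfl

open scoped Classical in
theorem stmt8 {R : Type*} [CommRing R] {n : ℕ} (hn : 1 ≤ n) (i j : ℕ) (hij : i + j ≤ n)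
    (g h : Matrix (Fin n) (Fin n) R)
    (a : Fin (i + j) → Fin n) (ha : StrictMono a) :
    (Nmat i j g h a).det =
      ∑ γ ∈ Finset.univ.filter (fun γ : Equiv.Perm (Fin (i + j)) =>
          StrictMono (fun p : Fin i => γ (Fin.castAdd j p)) ∧
          StrictMono (fun p : Fin j => γ (Fin.natAdd i p))),
        ((Equiv.Perm.sign γ : ℤ) : R) *
          minorM g (fun p : Fin i => a (γ (Fin.castAdd j p))) *
          minorM h (fun p : Fin j => a (γ (Fin.natAdd i p))) :=
  stmt8_general i j g h a
end

section
/- Let i, j ≥ 0 with i + j ≤ n and let a = (a_1 < ⋯ < a_{i+j}) be an increasing sequence in {1,…,n}. Then the determinant det N_{i,j}(g,h;a), computed for the generic matrices g and h over P, lies in the ideal power D^{min(i,j)}. -/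
/-
Subtracting the `g`-column `r` from the `h`-column `i + r`, for each `r < min i j`, is a
unipotent upper-triangular column operation and leaves the determinant unchanged. The new
columns have entries `h_{a_s,r} - g_{a_s,r} ∈ D`, and every term of the Leibniz expansion takes
one entry from each of these `min i j` columns.
-/

open MvPolynomial

open Finset

namespace Matrix

variable {ι R : Type*} [Fintype ι] [CommRing R]

section DecidableEq

variable [DecidableEq ι]

theorem det_mem_pow_card_of_col_mem (I : Ideal R) (M : Matrix ι ι R)
    (T : Finset ι) (h : ∀ s, ∀ t ∈ T, M s t ∈ I) : M.det ∈ I ^ T.card := by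
  rw [det_apply']
  refine Ideal.sum_mem _ fun σ _ => Ideal.mul_mem_left _ _ ?_
  rw [← prod_mul_prod_compl T, ← prod_const]
  exact Ideal.mul_mem_right _ _ (Ideal.prod_mem_prod fun t ht => h _ t ht)

def subCols (M : Matrix ι ι R) (T : Finset ι) (p : ι → ι) : Matrix ι ι R :=
  of fun s t => if t ∈ T then M s t - M s (p t) else M s t

end DecidableEq

variable [LinearOrder ι]

theorem det_subCols (M : Matrix ι ι R) (T : Finset ι) (p : ι → ι) (hp : ∀ t ∈ T, p t < t) :
    (M.subCols T p).det = M.det := by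
  set U : Matrix ι ι R := of fun u t => (1 : Matrix ι ι R) u t - if t ∈ T ∧ u = p t then 1 else 0
  have hMU : M.subCols T p = M * U := by
    ext s t
    by_cases ht : t ∈ T <;> simp [subCols, U, mul_apply, mul_sub, one_apply, ht]
  have hU : U.det = 1 := by
    rw [det_of_isUpperTriangular]
    · refine prod_eq_one fun t _ => ?_
      have : ¬(t ∈ T ∧ t = p t) := fun ⟨ht, htp⟩ => (hp t ht).ne' htp
      simp [U, this]
    · intro u t htu
      have hut : u ≠ t := htu.ne'
      have : ¬(t ∈ T ∧ u = p t) := fun ⟨ht, hup⟩ => (hup ▸ (hp t ht).trans htu).false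
      simp [U, this, one_apply_ne hut]
  rw [hMU, det_mul, hU, mul_one]

theorem det_mem_pow_card_of_col_sub_mem (I : Ideal R) (M : Matrix ι ι R) (T : Finset ι)
    (p : ι → ι) (hp : ∀ t ∈ T, p t < t) (hI : ∀ s, ∀ t ∈ T, M s t - M s (p t) ∈ I) :
    M.det ∈ I ^ T.card := by
  rw [← det_subCols M T p hp]
  exact det_mem_pow_card_of_col_mem I _ T fun s t ht => by simpa [subCols, ht] using hI s t ht

end Matrix

theorem stmt9_general (k : Type*) [Field k] (n : ℕ) (i j : ℕ)
    (a : Fin (i + j) → Fin n) :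
    (Nmat i j
        (Matrix.of fun s t : Fin n =>
          (X (Sum.inl (s, t)) : MvPolynomial ((Fin n × Fin n) ⊕ (Fin n × Fin n)) k))
        (Matrix.of fun s t : Fin n => X (Sum.inr (s, t))) a).det ∈
      (Ideal.span (Set.range fun p : Fin n × Fin n =>
        (X (Sum.inl p) - X (Sum.inr p) :
          MvPolynomial ((Fin n × Fin n) ⊕ (Fin n × Fin n)) k))) ^ (min i j) := by
  set T : Finset (Fin (i + j)) :=
    univ.map ((Fin.castLEEmb (min_le_right i j)).trans (Fin.natAddEmb i))
  have hT : T.card = min i j := by simp [T]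
  rw [← hT]
  refine Matrix.det_mem_pow_card_of_col_sub_mem _ _ T (fun t => ⟨t - i, by omega⟩) ?_ ?_
  · simp only [T, mem_map, mem_univ, true_and, forall_exists_index, forall_apply_eq_imp_iff]
    intro r
    simp only [Fin.lt_def, Function.Embedding.trans_apply, Fin.castLEEmb_apply,
      Fin.natAddEmb_apply, Fin.val_natAdd, Fin.val_castLE]
    omega
  · simp only [T, mem_map, mem_univ, true_and, forall_exists_index, forall_apply_eq_imp_iff]
    intro s r
    have hri : (r : ℕ) < i := r.2.trans_le (min_le_left i j)
    simp only [Nmat, Matrix.of_apply, Function.Embedding.trans_apply, Fin.castLEEmb_apply,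
      Fin.natAddEmb_apply, Fin.val_natAdd, Fin.val_castLE, add_lt_iff_neg_left, not_lt_zero,
      if_false, add_tsub_cancel_left, hri, if_true]
    split_ifs
    · rw [← neg_sub]
      exact neg_mem (Ideal.subset_span ⟨_, rfl⟩)
    · -- for `r ≥ n` both columns hold the junk value `0`
      simp

theorem stmt9 (k : Type*) [Field k] (n : ℕ) (hn : 1 ≤ n) (i j : ℕ) (hij : i + j ≤ n)
    (a : Fin (i + j) → Fin n) (ha : StrictMono a) :
    (Nmat i j
        (Matrix.of fun s t : Fin n =>
          (X (Sum.inl (s, t)) : MvPolynomial ((Fin n × Fin n) ⊕ (Fin n × Fin n)) k))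
        (Matrix.of fun s t : Fin n => X (Sum.inr (s, t))) a).det ∈
      (Ideal.span (Set.range fun p : Fin n × Fin n =>
        (X (Sum.inl p) - X (Sum.inr p) :
          MvPolynomial ((Fin n × Fin n) ⊕ (Fin n × Fin n)) k))) ^ (min i j) :=
  stmt9_general k n i j a
end

section
/- Let i, j ≥ 0 with i + j ≤ n, let h be an n×n matrix over R, and let a = (a_1 < ⋯ < a_{i+j}) be an increasing sequence in {1,…,n}. If a_s = s for all 1 ≤ s ≤ i, then det N_{i,j}(I_n, h; a) = m(h; (a_{i+1},…,a_{i+j})); otherwise det N_{i,j}(I_n, h; a) = 0. Here I_n denotes the n×n identity matrix. -/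
open MvPolynomial

/-!
The first `i` columns of `N_{i,j}(I_n, h; a)` are the standard basis columns `e_1, …, e_i`
restricted to the rows `a`. If `a` fixes `1, …, i`, these columns form an identity block above
a zero block (a strictly increasing `a` sends the remaining rows beyond `i`), so the determinant
is that of the lower-right block, the minor `m(h; a_{i+1}, …, a_{i+j})`. Otherwise some `t ≤ i`
is missed by `a`, and column `t` vanishes: as `s ≤ a_s`, an increasing `a` hitting all of
`1, …, i` must fix them.
-/

lemma Fin.val_le_val_apply_of_strictMono {m n : ℕ} {a : Fin m → Fin n} (ha : StrictMono a)
    (r : Fin m) : (r : ℕ) ≤ a r := by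
  obtain ⟨r, hr⟩ := r
  induction r with
  | zero => exact Nat.zero_le _
  | succ k ih =>
    exact (ih (by omega)).trans_lt (ha (Fin.mk_lt_mk.2 k.lt_succ_self))

lemma Fin.val_apply_castAdd_eq_of_forall_mem_range {i j n : ℕ} {a : Fin (i + j) → Fin n}
    (ha : StrictMono a) (hrange : ∀ t : Fin i, ∃ r, (a r : ℕ) = t) (s : Fin i) :
    (a (Fin.castAdd j s) : ℕ) = s := by
  induction s using WellFoundedLT.induction with
  | _ s ih =>
  obtain ⟨r, hr⟩ := hrange s
  rcases (hr ▸ Fin.val_le_val_apply_of_strictMono ha r : (r : ℕ) ≤ s).lt_or_eq with hlt | heq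
  · have hfixed : (a r : ℕ) = r := ih ⟨r, hlt.trans s.isLt⟩ hlt
    omega
  · rwa [show r = Fin.castAdd j s from Fin.ext heq] at hr

section Nmat

variable {R : Type*} [CommRing R] {n i j : ℕ}

lemma Nmat_apply_castAdd (hi : i ≤ n) (g h : Matrix (Fin n) (Fin n) R)
    (a : Fin (i + j) → Fin n) (s : Fin (i + j)) (t : Fin i) :
    Nmat i j g h a s (Fin.castAdd j t) = g (a s) (Fin.castLE hi t) := by
  simp [Nmat, Fin.castLE, show (t : ℕ) < n by omega]

lemma Nmat_apply_natAdd (hj : j ≤ n) (g h : Matrix (Fin n) (Fin n) R)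
    (a : Fin (i + j) → Fin n) (s : Fin (i + j)) (q : Fin j) :
    Nmat i j g h a s (Fin.natAdd i q) = h (a s) (Fin.castLE hj q) := by
  simp [Nmat, Fin.castLE, show (q : ℕ) < n by omega]

lemma minorM_eq_det {s : ℕ} (hs : s ≤ n) (g : Matrix (Fin n) (Fin n) R) (b : Fin s → Fin n) :
    minorM g b = (Matrix.of fun p q => g (b p) (Fin.castLE hs q)).det := by
  simp [minorM, Fin.castLE, fun q : Fin s => show (q : ℕ) < n by omega]

lemma det_Nmat_one_of_forall_val_castAdd_eq (hij : i + j ≤ n) (h : Matrix (Fin n) (Fin n) R)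
    {a : Fin (i + j) → Fin n} (ha : StrictMono a)
    (hfix : ∀ s : Fin i, (a (Fin.castAdd j s) : ℕ) = s) :
    (Nmat i j 1 h a).det = minorM h (fun p : Fin j => a (Fin.natAdd i p)) := by
  have hi : i ≤ n := by omega
  have hj : j ≤ n := by omega
  have hblocks : (Nmat i j 1 h a).submatrix finSumFinEquiv finSumFinEquiv =
      Matrix.fromBlocks 1 (Matrix.of fun s q => h (a (Fin.castAdd j s)) (Fin.castLE hj q)) 0
        (Matrix.of fun p q => h (a (Fin.natAdd i p)) (Fin.castLE hj q)) := by
    ext (s | p) (t | q)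
    · simp [Nmat_apply_castAdd hi, Matrix.one_apply, Fin.ext_iff, hfix]
    · simp [Nmat_apply_natAdd hj]
    · have hlt : (t : ℕ) < a (Fin.natAdd i p) :=
        (Fin.val_le_val_apply_of_strictMono ha (Fin.natAdd i p)).trans_lt'
          (by simp only [Fin.val_natAdd]; omega)
      simp [Nmat_apply_castAdd hi, Fin.ext_iff, hlt.ne']
    · simp [Nmat_apply_natAdd hj]
  rw [← Matrix.det_submatrix_equiv_self finSumFinEquiv, hblocks, Matrix.det_fromBlocks_zero₂₁,
    Matrix.det_one, one_mul, minorM_eq_det hj]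

lemma det_Nmat_one_eq_zero_of_forall_ne (hi : i ≤ n) (h : Matrix (Fin n) (Fin n) R)
    {a : Fin (i + j) → Fin n} (t : Fin i) (ht : ∀ r, (a r : ℕ) ≠ t) :
    (Nmat i j 1 h a).det = 0 :=
  Matrix.det_eq_zero_of_column_eq_zero (Fin.castAdd j t) fun r => by
    simp [Nmat_apply_castAdd hi, Fin.ext_iff, ht r]

end Nmat

theorem stmt10_general {R : Type*} [CommRing R] {n : ℕ} (i j : ℕ) (hij : i + j ≤ n)
    (h : Matrix (Fin n) (Fin n) R) (a : Fin (i + j) → Fin n) (ha : StrictMono a) :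
    ((∀ s : Fin i, (a (Fin.castAdd j s) : ℕ) = (s : ℕ)) →
      (Nmat i j (1 : Matrix (Fin n) (Fin n) R) h a).det =
        minorM h (fun p : Fin j => a (Fin.natAdd i p))) ∧
    ((¬ ∀ s : Fin i, (a (Fin.castAdd j s) : ℕ) = (s : ℕ)) →
      (Nmat i j (1 : Matrix (Fin n) (Fin n) R) h a).det = 0) := by
  refine ⟨det_Nmat_one_of_forall_val_castAdd_eq hij h ha, fun hfix => ?_⟩
  obtain ⟨t, ht⟩ : ∃ t : Fin i, ∀ r, (a r : ℕ) ≠ t := by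
    by_contra! hrange
    exact hfix (Fin.val_apply_castAdd_eq_of_forall_mem_range ha hrange)
  exact det_Nmat_one_eq_zero_of_forall_ne (by omega) h t ht

theorem stmt10 {R : Type*} [CommRing R] {n : ℕ} (hn : 1 ≤ n) (i j : ℕ) (hij : i + j ≤ n)
    (h : Matrix (Fin n) (Fin n) R) (a : Fin (i + j) → Fin n) (ha : StrictMono a) :
    ((∀ s : Fin i, (a (Fin.castAdd j s) : ℕ) = (s : ℕ)) →
      (Nmat i j (1 : Matrix (Fin n) (Fin n) R) h a).det =
        minorM h (fun p : Fin j => a (Fin.natAdd i p))) ∧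
    ((¬ ∀ s : Fin i, (a (Fin.castAdd j s) : ℕ) = (s : ℕ)) →
      (Nmat i j (1 : Matrix (Fin n) (Fin n) R) h a).det = 0) :=
  stmt10_general i j hij h a ha
end

section
/- Let 2 ≤ i ≤ n. There exists a nonzero constant c ∈ k such that for every lower unitriangular n×n matrix Z over k, the ⌈i/2⌉ × ⌈i/2⌉ minor of Z^{−1} with rows ⌊i/2⌋+1, ⌊i/2⌋+2, …, i and columns 1,…,⌈i/2⌉ equals c times the ⌊i/2⌋ × ⌊i/2⌋ minor of Z with rows ⌈i/2⌉+1, ⌈i/2⌉+2, …, i and columns 1,…,⌊i/2⌋. -/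
/-!
Jacobi's complementary minor identity: if `Z` is invertible and the index set is split as
`α ⊕ β` once along the rows and once along the columns, then the `α`-minor of `Z⁻¹` equals
`± (det Z)⁻¹` times the complementary `β`-minor of `Z`. For a lower unitriangular `Z` take the
`α`-minor of `Z⁻¹` with rows `l, …, l + m - 1` and columns `0, …, m - 1`. The complementary minor of
`Z` has rows `m, …, n - 1` and columns `0, …, l - 1, l + m, …, n - 1`; it is block lower triangular,
with the `l × l` minor of `Z` in rows `m, …, m + l - 1` and a unitriangular block on the diagonal,
so its determinant is that of the `l × l` minor. The sign depends only on the two splittings.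
-/

open Equiv

namespace Matrix

variable {R : Type*} [CommRing R]

theorem det_mul_det_inv_toBlocks₁₁ {α β : Type*} [Fintype α] [Fintype β] [DecidableEq α]
    [DecidableEq β] (M : Matrix (α ⊕ β) (α ⊕ β) R) (hM : IsUnit M.det) :
    M.det * M⁻¹.toBlocks₁₁.det = M.toBlocks₂₂.det := by
  have hMM := M.mul_nonsing_inv hM
  have hprod : M * fromBlocks M⁻¹.toBlocks₁₁ 0 M⁻¹.toBlocks₂₁ 1 =
      fromBlocks 1 M.toBlocks₁₂ 0 M.toBlocks₂₂ := by
    ext x (b | b)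
    · have := congrFun (congrFun hMM x) (.inl b)
      rcases x with x | x <;>
        simpa [mul_apply, Fintype.sum_sum_type, toBlocks₁₁, toBlocks₂₁, one_apply] using this
    · rcases x with x | x <;>
        simp [mul_apply, Fintype.sum_sum_type, one_apply, toBlocks₁₂, toBlocks₂₂]
  simpa [det_fromBlocks_zero₁₂, det_fromBlocks_zero₂₁] using congrArg det hprod

theorem det_submatrix_equiv {ι κ : Type*} [Fintype ι] [DecidableEq ι] [Fintype κ] [DecidableEq κ]
    (Z : Matrix ι ι R) (e f : κ ≃ ι) :
    (Z.submatrix e f).det = Perm.sign (e.trans f.symm) * Z.det := by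
  rw [← det_submatrix_equiv_self f Z, ← det_permute]
  congr
  ext
  simp

theorem det_inv_submatrix_inl {ι α β : Type*} [Fintype ι] [DecidableEq ι] [Fintype α]
    [DecidableEq α] [Fintype β] [DecidableEq β] (Z : Matrix ι ι R) (hZ : IsUnit Z.det)
    (e f : α ⊕ β ≃ ι) :
    (Z⁻¹.submatrix (f ∘ Sum.inl) (e ∘ Sum.inl)).det =
      Perm.sign (e.trans f.symm) * Z⁻¹.det * (Z.submatrix (e ∘ Sum.inr) (f ∘ Sum.inr)).det := by
  have hsign : ((Perm.sign (e.trans f.symm) : ℤ) : R) * Perm.sign (e.trans f.symm) = 1 := by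
    rw [← Int.cast_mul, ← Units.val_mul, Int.units_mul_self, Units.val_one, Int.cast_one]
  have hjac := det_mul_det_inv_toBlocks₁₁ (Z.submatrix e f)
    (by rw [det_submatrix_equiv]; exact (Units.isUnit _).map (Int.castRingHom R) |>.mul hZ)
  rw [det_submatrix_equiv, inv_submatrix_equiv] at hjac
  change _ * _ * (Z⁻¹.submatrix (f ∘ Sum.inl) (e ∘ Sum.inl)).det =
    (Z.submatrix (e ∘ Sum.inr) (f ∘ Sum.inr)).det at hjac
  have hinv : Ring.inverse Z.det * Z.det = 1 := Ring.inverse_mul_cancel _ hZ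
  rw [det_nonsing_inv]
  linear_combination ((Perm.sign (e.trans f.symm) : R) * Ring.inverse Z.det) * hjac +
    (-(Ring.inverse Z.det * Z.det * (Z⁻¹.submatrix (f ∘ Sum.inl) (e ∘ Sum.inl)).det)) * hsign -
    (Z⁻¹.submatrix (f ∘ Sum.inl) (e ∘ Sum.inl)).det * hinv

theorem det_eq_one_of_isLowerTriangular {ι : Type*} [Fintype ι] [DecidableEq ι] [LinearOrder ι]
    (A : Matrix ι ι R) (hA : A.IsLowerTriangular) (hdiag : ∀ p, A p p = 1) : A.det = 1 := by
  simp [det_of_isLowerTriangular A hA, hdiag]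

end Matrix

def finSumSumEquiv {a b c n : ℕ} (h : a + b + c = n) : Fin a ⊕ (Fin b ⊕ Fin c) ≃ Fin n :=
  ((sumAssoc _ _ _).symm.trans
    ((finSumFinEquiv.sumCongr (Equiv.refl _)).trans finSumFinEquiv)).trans (finCongr h)

section finSumSumEquiv

variable {a b c n : ℕ} (h : a + b + c = n)

@[simp]
theorem val_finSumSumEquiv_inl (p : Fin a) : (finSumSumEquiv h (.inl p) : ℕ) = p := by
  simp [finSumSumEquiv]

@[simp]
theorem val_finSumSumEquiv_inr_inl (q : Fin b) :
    (finSumSumEquiv h (.inr (.inl q)) : ℕ) = a + q := by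
  simp [finSumSumEquiv]

@[simp]
theorem val_finSumSumEquiv_inr_inr (r : Fin c) :
    (finSumSumEquiv h (.inr (.inr r)) : ℕ) = a + b + r := by
  simp [finSumSumEquiv]

end finSumSumEquiv

theorem exists_sign_det_inv_submatrix_eq {R : Type*} [CommRing R] {n l m : ℕ} (h : l + m ≤ n) :
    ∃ s : ℤˣ, ∀ Z : Matrix (Fin n) (Fin n) R, Z.IsLowerTriangular → (∀ p, Z p p = 1) →
      (Matrix.of fun p q : Fin m => Z⁻¹ ⟨l + p, by omega⟩ ⟨q, by omega⟩).det =
        s * (Matrix.of fun p q : Fin l => Z ⟨m + p, by omega⟩ ⟨q, by omega⟩).det := by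
  let e := finSumSumEquiv (show m + l + (n - (l + m)) = n by omega)
  let f := ((sumAssoc _ _ _).symm.trans
    (((sumComm _ _).sumCongr (Equiv.refl _)).trans (sumAssoc _ _ _))).trans
    (finSumSumEquiv (show l + m + (n - (l + m)) = n by omega))
  refine ⟨Perm.sign (e.trans f.symm), fun Z hZ hdiag => ?_⟩
  have hdet : Z.det = 1 := Z.det_eq_one_of_isLowerTriangular hZ hdiag
  have hjac := Z.det_inv_submatrix_inl (by simp [hdet]) e f
  rw [Matrix.det_nonsing_inv, hdet, Ring.inverse_one, mul_one] at hjac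
  convert hjac using 3
  · rfl
  · set B := Z.submatrix (e ∘ Sum.inr) (f ∘ Sum.inr)
    have h12 : B.toBlocks₁₂ = 0 := by
      ext q r
      refine hZ ?_
      simp [e, f, Fin.lt_def]
      omega
    have h22 : B.toBlocks₂₂.det = 1 := by
      refine B.toBlocks₂₂.det_eq_one_of_isLowerTriangular (fun r r' hr => hZ ?_) (fun r => ?_)
      · rw [OrderDual.toDual_lt_toDual, Fin.lt_def] at hr ⊢
        simp [e, f]
        omega
      · have hfe : f (.inr (.inr r)) = e (.inr (.inr r)) := Fin.ext (by simp [e, f, add_comm l m])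
        exact (congrArg (Z _) hfe).trans (hdiag _)
    rw [← Matrix.fromBlocks_toBlocks B, h12, Matrix.det_fromBlocks_zero₁₂, h22, mul_one]
    rfl

theorem stmt11 (k : Type*) [Field k] (n i : ℕ) (hin : i ≤ n) :
    ∃ c : k, c ≠ 0 ∧ ∀ Z : Matrix (Fin n) (Fin n) k,
      (∀ p : Fin n, Z p p = 1) →
      (∀ p q : Fin n, (p : ℕ) < (q : ℕ) → Z p q = 0) →
      (Matrix.of fun p q : Fin (i - i / 2) =>
          Z⁻¹ ⟨i / 2 + (p : ℕ), by have := p.isLt; omega⟩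
              ⟨(q : ℕ), by have := q.isLt; omega⟩).det =
        c * (Matrix.of fun p q : Fin (i / 2) =>
          Z ⟨(i - i / 2) + (p : ℕ), by have := p.isLt; omega⟩
            ⟨(q : ℕ), by have := q.isLt; omega⟩).det := by
  obtain ⟨s, hs⟩ :=
    exists_sign_det_inv_submatrix_eq (R := k) (show i / 2 + (i - i / 2) ≤ n by omega)
  exact ⟨((s : ℤ) : k), (s.isUnit.map (Int.castRingHom k)).ne_zero,
    fun Z hdiag hlow => hs Z (fun p q hpq => hlow p q hpq) hdiag⟩
end

section
/- Let n = 2m and let S = k[z_{i,j} : 1 ≤ j < i ≤ n, i+j ≤ n+1] be a polynomial ring. Let φ : k[Z_{i,j} : 1 ≤ j < i ≤ n] → S be any k-algebra homomorphism satisfying φ(Z_{i,j}) = z_{i,j} whenever i + j ≤ n + 1. Then for each 1 ≤ r ≤ n, the polynomial φ(𝔣_r) is a residual normal crossing relative to the subset {z_{i,j} : 1 ≤ j < i ≤ n, i + j ≤ r + 1} of the variables of S, equipped with the order: z_{i,j} ≤ z_{i',j'} iff i+j < i'+j', or i+j = i'+j' and i ≤ i'. -/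
/-!
Induct on `r`, using `𝔣_{r+1} = 𝔣_r · v_{r+1}`. Residual normal crossings are multiplicative:
if `g` is one relative to `J`, and `w` with the variables of `J` set to zero is one relative to
`J'`, then `g w` is one relative to `J ++ J'`. The variables added at step `r + 1` are the
`z_{i,j}` with `i + j = r + 2`. Once all `z_{i,j}` with `i + j ≤ r + 1` are set to zero, the
matrix of `φ(v_{r+1})` vanishes above its antidiagonal, whose entries are exactly these new
variables (together with a `1` when `r + 1` is odd). So this image of `v_{r+1}` is `±` their
product, a residual normal crossing relative to them.
-/

open MvPolynomial

/-- The index set of the variables `z_{i,j}`, `1 ≤ j < i ≤ n`, `i + j ≤ n + 1`,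
of the polynomial ring `S`. -/
abbrev SubP (n : ℕ) : ℕ × ℕ → Prop :=
  fun p => 1 ≤ p.2 ∧ p.2 < p.1 ∧ p.1 ≤ n ∧ p.1 + p.2 ≤ n + 1

section ResidualNormalCrossing

variable {σ : Type*} [DecidableEq σ] {k : Type*} [Field k]

noncomputable def setZeros (l : List σ) : MvPolynomial σ k →ₐ[k] MvPolynomial σ k :=
  aeval fun i => if i ∈ l then 0 else X i

@[simp]
lemma setZeros_X (l : List σ) (i : σ) :
    setZeros l (X i : MvPolynomial σ k) = if i ∈ l then 0 else X i :=
  aeval_X _ _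

lemma setZeros_nil :
    (setZeros [] : MvPolynomial σ k →ₐ[k] MvPolynomial σ k) = AlgHom.id k _ := by
  ext i
  simp

lemma setZeros_cons (j : σ) (l : List σ) :
    (setZeros (j :: l) : MvPolynomial σ k →ₐ[k] MvPolynomial σ k) =
      (setZeros l).comp (setZero j) := by
  ext i
  by_cases hij : i = j <;> simp [setZero, hij]

lemma setZero_C (j : σ) (c : k) : setZero j (C c : MvPolynomial σ k) = C c :=
  algHom_C _ _

lemma IsRNC.C_mul {c : k} (hc : c ≠ 0) :
    ∀ {l : List σ} {w : MvPolynomial σ k}, IsRNC w l → IsRNC (C c * w) l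
  | [], _, ⟨e, he, hw⟩ => ⟨c * e, mul_ne_zero hc he, by rw [hw, map_mul]⟩
  | _ :: _, _, ⟨h, hw, hrec⟩ =>
    ⟨C c * h, by rw [hw, mul_left_comm], by rw [map_mul, setZero_C]; exact hrec.C_mul hc⟩

lemma IsRNC.units_zsmul {l : List σ} {w : MvPolynomial σ k} (hw : IsRNC w l) (u : ℤˣ) :
    IsRNC (u • w) l := by
  rw [Units.smul_def, zsmul_eq_mul, ← map_intCast (C : k →+* MvPolynomial σ k)]
  exact hw.C_mul (u.isUnit.map (Int.castRingHom k)).ne_zero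

lemma isRNC_prod_X : ∀ {l : List σ}, l.Nodup → IsRNC ((l.map X).prod : MvPolynomial σ k) l
  | [], _ => ⟨1, one_ne_zero, by simp⟩
  | j :: l, hnd => by
    refine ⟨(l.map X).prod, by simp, ?_⟩
    have hj : j ∉ l := (List.nodup_cons.mp hnd).1
    have hfix : setZero j ((l.map X).prod : MvPolynomial σ k) = (l.map X).prod := by
      rw [map_list_prod, List.map_map]
      refine congrArg _ (List.map_congr_left fun i hi => ?_)
      simp [setZero, show i ≠ j from fun h => hj (h ▸ hi)]
    rw [hfix]
    exact isRNC_prod_X (List.nodup_cons.mp hnd).2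

lemma IsRNC.mul :
    ∀ {l : List σ} {g : MvPolynomial σ k}, IsRNC g l →
      ∀ {l' : List σ} {w : MvPolynomial σ k},
        IsRNC (setZeros l w) l' → IsRNC (g * w) (l ++ l')
  | [], _, ⟨c, hc, hg⟩, _, _, hw => by
    rw [setZeros_nil] at hw
    rw [hg]
    exact hw.C_mul hc
  | _ :: _, _, ⟨h, hg, hrec⟩, _, _, hw => by
    rw [setZeros_cons] at hw
    exact ⟨h * _, by rw [hg, mul_assoc], by rw [map_mul]; exact hrec.mul hw⟩

end ResidualNormalCrossing

lemma Matrix.det_eq_sign_revPerm_smul_prod_of_antitriangular {R : Type*} [CommRing R] {P : ℕ}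
    (N : Matrix (Fin P) (Fin P) R) (h : ∀ p q : Fin P, (p : ℕ) + q + 1 < P → N p q = 0) :
    N.det = Equiv.Perm.sign (Fin.revPerm : Equiv.Perm (Fin P)) • ∏ p, N p p.rev := by
  have hlower : (N.submatrix id Fin.revPerm).det = ∏ p, N p p.rev :=
    det_of_isLowerTriangular _ fun p q hpq => h _ _ (by
      have : (p : ℕ) < q := hpq
      simp only [id_eq, Fin.revPerm_apply, Fin.val_rev]
      omega)
  rw [← hlower, det_permute', Units.smul_def, zsmul_eq_mul, ← mul_assoc, ← Int.cast_mul,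
    ← Units.val_mul, Int.units_mul_self, Units.val_one, Int.cast_one, one_mul]

lemma zord_asymm {p q : ℕ × ℕ} (h : zord p q) : ¬ zord q p := by
  unfold zord at *
  omega

/-- `z_{i,j}` on the index set of `S` and `1` elsewhere, so that it also covers the entries
`Z_{i,i} = 1` that occur on the antidiagonal of `v_s` for odd `s`. -/
noncomputable def zvar (k : Type*) [Field k] (n : ℕ) (z : ℕ × ℕ) :
    MvPolynomial (Subtype (SubP n)) k :=
  if h : SubP n z then X ⟨z, h⟩ else 1

section Staircase

variable {k : Type*} [Field k] {n : ℕ}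

lemma prod_zvar_antidiagonal {s : ℕ} {l : List (Subtype (SubP n))} (hnd : l.Nodup)
    (hl : ∀ z, z ∈ l ↔ z.val.1 + z.val.2 = s + 1) :
    ∏ p : Fin (s - s / 2), zvar k n (s / 2 + 1 + p, s - s / 2 - p) = (l.map X).prod := by
  let e : Fin (s - s / 2) → ℕ × ℕ := fun p => (s / 2 + 1 + p, s - s / 2 - p)
  have he : Set.InjOn e (Finset.univ : Finset (Fin (s - s / 2))) := fun p _ q _ hpq =>
    Fin.ext (by have := congrArg Prod.fst hpq; simp only [e] at this; omega)
  rw [← Finset.prod_image (f := zvar k n) he,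
    ← Finset.prod_subset (s₁ := (l.map Subtype.val).toFinset), List.prod_toFinset _
      (hnd.map Subtype.val_injective), List.map_map]
  · exact congrArg _ (List.map_congr_left fun z _ => dif_pos z.2)
  · intro z hz
    obtain ⟨⟨⟨i, j⟩, hij⟩, hzl, rfl⟩ := List.mem_map.mp (List.mem_toFinset.mp hz)
    have hsum := (hl _).mp hzl
    simp only at hsum
    obtain ⟨h1, h2, -, -⟩ := hij
    refine Finset.mem_image.mpr ⟨⟨i - (s / 2 + 1), by omega⟩, Finset.mem_univ _, ?_⟩
    simp only [e, Prod.mk.injEq]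
    omega
  · intro z hz hzl
    obtain ⟨p, -, rfl⟩ := Finset.mem_image.mp hz
    refine dif_neg fun h =>
      hzl (List.mem_toFinset.mpr (List.mem_map.mpr ⟨⟨_, h⟩, (hl _).mpr ?_, rfl⟩))
    have := p.2
    simp only
    omega

lemma map_vminor_eq_sign_smul_prod {s : ℕ} (hs : s ≤ n)
    (ψ : MvPolynomial (ℕ × ℕ) k →ₐ[k] MvPolynomial (Subtype (SubP n)) k)
    (hzero : ∀ i j, 1 ≤ j → j < i → i + j ≤ s → ψ (X (i, j)) = 0)
    (hvar : ∀ i j (h : SubP n (i, j)), i + j = s + 1 → ψ (X (i, j)) = X ⟨(i, j), h⟩)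
    {l : List (Subtype (SubP n))} (hnd : l.Nodup)
    (hl : ∀ z, z ∈ l ↔ z.val.1 + z.val.2 = s + 1) :
    ψ (vminor k fun p : Fin (s - s / 2) => s / 2 + 1 + p)
      = Equiv.Perm.sign (Fin.revPerm : Equiv.Perm (Fin (s - s / 2))) • (l.map X).prod := by
  have hanti : ∀ i j, 1 ≤ j → j ≤ i → i + j = s + 1 →
      ψ (Zent k i j) = zvar k n (i, j) := by
    intro i j h1 h2 hsum
    rcases h2.lt_or_eq with h2 | rfl
    · have h : SubP n (i, j) := ⟨h1, h2, by omega, by omega⟩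
      rw [Zent, if_neg h2.ne', if_pos h2, hvar i j h hsum, zvar, dif_pos h]
    · rw [Zent, if_pos rfl, map_one, zvar, dif_neg fun h => h.2.1.false]
  rw [vminor, AlgHom.map_det, Matrix.det_eq_sign_revPerm_smul_prod_of_antitriangular,
    ← prod_zvar_antidiagonal hnd hl]
  · refine congrArg _ (Finset.prod_congr rfl fun p _ => ?_)
    have := p.2
    simp only [AlgHom.mapMatrix_apply, Matrix.map_apply, Matrix.of_apply, Fin.val_rev]
    rw [show s - s / 2 - (p + 1) + 1 = s - s / 2 - p by omega]
    exact hanti _ _ (by omega) (by omega) (by omega)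
  · intro p q hpq
    simp only [AlgHom.mapMatrix_apply, Matrix.map_apply, Matrix.of_apply]
    rw [Zent, if_neg (by omega), if_pos (by omega)]
    exact hzero _ _ (by omega) (by omega) (by omega)

lemma isRNC_setZeros_map_vminor
    (φ : MvPolynomial (ℕ × ℕ) k →ₐ[k] MvPolynomial (Subtype (SubP n)) k)
    (hφ : ∀ (p : ℕ × ℕ) (hp : SubP n p), φ (X p) = X ⟨p, hp⟩)
    {s : ℕ} (hs : s ≤ n) {l₁ l₂ : List (Subtype (SubP n))}
    (hl₁ : ∀ z, z ∈ l₁ ↔ z.val.1 + z.val.2 ≤ s)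
    (hnd : l₂.Nodup) (hl₂ : ∀ z, z ∈ l₂ ↔ z.val.1 + z.val.2 = s + 1) :
    IsRNC (setZeros l₁ (φ (vminor k fun p : Fin (s - s / 2) => s / 2 + 1 + p))) l₂ := by
  rw [← AlgHom.comp_apply, map_vminor_eq_sign_smul_prod hs _ ?_ ?_ hnd hl₂]
  · exact (isRNC_prod_X hnd).units_zsmul _
  · intro i j h1 h2 hsum
    have h : SubP n (i, j) := ⟨h1, h2, by omega, by omega⟩
    simp [hφ _ h, (hl₁ ⟨_, h⟩).mpr hsum]
  · intro i j h hsum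
    simp [hφ _ h, (hl₁ ⟨(i, j), h⟩).not.mpr (show ¬ i + j ≤ s by omega)]

lemma filter_append_filter_not_of_pairwise_zord {P : ℕ × ℕ → Prop} {l : List (Subtype P)}
    (hsort : l.Pairwise fun p q => zord p.val q.val) (d : ℕ) :
    l.filter (fun z => z.val.1 + z.val.2 ≤ d) ++
      l.filter (fun z => !decide (z.val.1 + z.val.2 ≤ d)) = l := by
  refine List.Perm.eq_of_pairwise (fun a b _ _ hab hba => (zord_asymm hab hba).elim) ?_ hsort
    (List.filter_append_perm _ _)
  refine List.pairwise_append.mpr ⟨hsort.filter _, hsort.filter _, fun a ha b hb => ?_⟩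
  simp only [List.mem_filter, decide_eq_true_eq, Bool.not_eq_true', decide_eq_false_iff_not]
    at ha hb
  exact Or.inl (by omega)

theorem isRNC_map_fRNC
    (φ : MvPolynomial (ℕ × ℕ) k →ₐ[k] MvPolynomial (Subtype (SubP n)) k)
    (hφ : ∀ (p : ℕ × ℕ) (hp : SubP n p), φ (X p) = X ⟨p, hp⟩)
    {r : ℕ} (hrn : r ≤ n) (l : List (Subtype (SubP n)))
    (hmem : ∀ z : Subtype (SubP n), z ∈ l ↔ z.val.1 + z.val.2 ≤ r + 1)
    (hsort : l.Pairwise fun p q => zord p.val q.val) :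
    IsRNC (φ (fRNC k r)) l := by
  induction r generalizing l with
  | zero =>
    obtain rfl : l = [] := List.eq_nil_iff_forall_not_mem.mpr fun z hz => by
      have := (hmem z).mp hz
      have := z.2
      omega
    exact ⟨1, one_ne_zero, by simp [fRNC]⟩
  | succ r ih =>
    have hmem₁ : ∀ z, z ∈ l.filter (fun z => z.val.1 + z.val.2 ≤ r + 1) ↔
        z.val.1 + z.val.2 ≤ r + 1 := fun z => by
      simp only [List.mem_filter, hmem, decide_eq_true_eq]
      omega
    have hmem₂ : ∀ z, z ∈ l.filter (fun z => !decide (z.val.1 + z.val.2 ≤ r + 1)) ↔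
        z.val.1 + z.val.2 = r + 1 + 1 := fun z => by
      simp only [List.mem_filter, hmem, Bool.not_eq_true', decide_eq_false_iff_not]
      omega
    have hnd₂ : (l.filter fun z => !decide (z.val.1 + z.val.2 ≤ r + 1)).Nodup :=
      (hsort.filter _).imp fun hab => by
        rintro rfl
        exact zord_asymm hab hab
    rw [fRNC, Finset.prod_Icc_succ_top (by omega), ← fRNC, map_mul,
      ← filter_append_filter_not_of_pairwise_zord hsort (r + 1)]
    exact (ih (by omega) _ hmem₁ (hsort.filter _)).mul
      (isRNC_setZeros_map_vminor φ hφ hrn hmem₁ hnd₂ hmem₂)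

end Staircase

theorem stmt13_general (k : Type*) [Field k] (m : ℕ)
    (φ : MvPolynomial (ℕ × ℕ) k →ₐ[k] MvPolynomial (Subtype (SubP (2 * m))) k)
    (hφ : ∀ (p : ℕ × ℕ) (hp : SubP (2 * m) p), φ (X p) = X ⟨p, hp⟩)
    (r : ℕ) (hrn : r ≤ 2 * m)
    (l : List (Subtype (SubP (2 * m))))
    (hmem : ∀ p : Subtype (SubP (2 * m)), p ∈ l ↔ p.val.1 + p.val.2 ≤ r + 1)
    (hsort : l.Pairwise (fun p q => zord p.val q.val)) :
    IsRNC (φ (fRNC k r)) l :=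
  isRNC_map_fRNC φ hφ hrn l hmem hsort

theorem stmt13 (k : Type*) [Field k] (m : ℕ) (hm : 1 ≤ m)
    (φ : MvPolynomial (ℕ × ℕ) k →ₐ[k] MvPolynomial (Subtype (SubP (2 * m))) k)
    (hφ : ∀ (p : ℕ × ℕ) (hp : SubP (2 * m) p), φ (X p) = X ⟨p, hp⟩)
    (r : ℕ) (hr1 : 1 ≤ r) (hrn : r ≤ 2 * m)
    (l : List (Subtype (SubP (2 * m))))
    (hmem : ∀ p : Subtype (SubP (2 * m)), p ∈ l ↔ p.val.1 + p.val.2 ≤ r + 1)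
    (hsort : l.Pairwise (fun p q => zord p.val q.val)) :
    IsRNC (φ (fRNC k r)) l :=
  stmt13_general k m φ hφ r hrn l hmem hsort
end

section
/- Let n = 2m and let S = k[z_{i,j} : 1 ≤ j < i ≤ n, i+j ≤ n+1] be a polynomial ring. Let φ : k[Z_{i,j} : 1 ≤ j < i ≤ n] → S be any k-algebra homomorphism satisfying φ(Z_{i,j}) = z_{i,j} whenever i + j ≤ n + 1. Then for every positive integer d, the monomial ∏_{1 ≤ j < i ≤ n, i+j ≤ n+1} z_{i,j}^d appears with nonzero coefficient in φ(𝔣_n)^d. -/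
open MvPolynomial

/-! Give the variable `z_{i,j}` the weight `(n + 2 - i - j)²`. In the minor
`v_s = det (Z_{⌊s/2⌋+1+σ(i), i+1})`, the entries picked by a permutation `σ` have anti-diagonal
indices `c_i = row + column` whose sum does not depend on `σ`; the reversal makes all of them equal
to `s + 1`. By strict convexity of the weight (the tangent-line bound at `s + 1`) every other
permutation yields only monomials of strictly larger weight, so the anti-diagonal monomial is the
unique monomial of least weight in `φ v_s`. Unique least-weight monomials multiply, and the
anti-diagonal monomials of `v_1, …, v_n` together contain every variable of `S` exactly once. -/

open Finsupp (weight)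

namespace MvPolynomial

open Finset.HasAntidiagonal (mem_antidiagonal)

variable {σ R Γ : Type*}

section CommSemiring

variable [CommSemiring R] [AddCommMonoid Γ] [PartialOrder Γ]

variable (w : σ → Γ) in
def IsUniqueMinWeight (F : MvPolynomial σ R) (M : σ →₀ ℕ) : Prop :=
  coeff M F ≠ 0 ∧ ∀ μ ∈ F.support, μ ≠ M → weight w M < weight w μ

variable {w : σ → Γ} {F G : MvPolynomial σ R} {M N : σ →₀ ℕ}

theorem isUniqueMinWeight_monomial {c : R} (hc : c ≠ 0) :
    IsUniqueMinWeight w (monomial M c) M := by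
  classical
  refine ⟨by rwa [coeff_monomial, if_pos rfl], fun μ hμ hne => ?_⟩
  exact absurd (Finset.mem_singleton.mp (support_monomial_subset hμ)) hne

theorem IsUniqueMinWeight.weight_le (h : IsUniqueMinWeight w F M) {μ : σ →₀ ℕ}
    (hμ : μ ∈ F.support) : weight w M ≤ weight w μ := by
  rcases eq_or_ne μ M with rfl | hne
  · exact le_rfl
  · exact (h.2 μ hμ hne).le

theorem IsUniqueMinWeight.add (hF : IsUniqueMinWeight w F M)
    (hG : ∀ μ ∈ G.support, weight w M < weight w μ) : IsUniqueMinWeight w (F + G) M := by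
  classical
  have hGM : coeff M G = 0 := notMem_support_iff.mp fun hM => lt_irrefl _ (hG M hM)
  refine ⟨by rw [coeff_add, hGM, add_zero]; exact hF.1, fun μ hμ hne => ?_⟩
  rcases Finset.mem_union.mp (support_add hμ) with hμF | hμG
  · exact hF.2 μ hμF hne
  · exact hG μ hμG

variable [IsOrderedCancelAddMonoid Γ]

theorem le_weight_of_mem_support_mul {a b : Γ}
    (hF : ∀ μ ∈ F.support, a ≤ weight w μ) (hG : ∀ μ ∈ G.support, b ≤ weight w μ) :
    ∀ μ ∈ (F * G).support, a + b ≤ weight w μ := by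
  classical
  intro μ hμ
  obtain ⟨x, hx, y, hy, rfl⟩ := Finset.mem_add.mp (support_mul F G hμ)
  rw [map_add]
  exact add_le_add (hF x hx) (hG y hy)

theorem le_weight_of_mem_support_prod {ι : Type*} (s : Finset ι) (F : ι → MvPolynomial σ R)
    (b : ι → Γ) (h : ∀ i ∈ s, ∀ μ ∈ (F i).support, b i ≤ weight w μ) :
    ∀ μ ∈ (∏ i ∈ s, F i).support, ∑ i ∈ s, b i ≤ weight w μ := by
  induction s using Finset.cons_induction with
  | empty =>
    intro μ hμ
    rw [Finset.prod_empty, ← C_1, C_apply] at hμ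
    rw [Finset.mem_singleton.mp (support_monomial_subset hμ), map_zero, Finset.sum_empty]
  | cons a s ha ih =>
    rw [Finset.prod_cons, Finset.sum_cons]
    exact le_weight_of_mem_support_mul (h a (Finset.mem_cons_self a s))
      (ih fun i hi => h i (Finset.mem_cons_of_mem hi))

theorem IsUniqueMinWeight.weight_add_lt (hF : IsUniqueMinWeight w F M)
    (hG : IsUniqueMinWeight w G N) {x y : σ →₀ ℕ} (hx : x ∈ F.support) (hy : y ∈ G.support)
    (hne : (x, y) ≠ (M, N)) : weight w (M + N) < weight w (x + y) := by
  rw [map_add, map_add]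
  by_cases hxM : x = M
  · subst hxM
    exact add_lt_add_right (hG.2 y hy fun hyN => hne (by rw [hyN])) _
  · exact add_lt_add_of_lt_of_le (hF.2 x hx hxM) (hG.weight_le hy)

variable [NoZeroDivisors R]

theorem IsUniqueMinWeight.mul (hF : IsUniqueMinWeight w F M) (hG : IsUniqueMinWeight w G N) :
    IsUniqueMinWeight w (F * G) (M + N) := by
  classical
  constructor
  · rw [coeff_mul, Finset.sum_eq_single_of_mem (M, N) (mem_antidiagonal.mpr rfl)]
    · exact mul_ne_zero hF.1 hG.1
    rintro ⟨x, y⟩ hxy hne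
    by_contra hc
    have hx : x ∈ F.support := mem_support_iff.mpr (left_ne_zero_of_mul hc)
    have hy : y ∈ G.support := mem_support_iff.mpr (right_ne_zero_of_mul hc)
    have := hF.weight_add_lt hG hx hy hne
    rw [mem_antidiagonal.mp hxy] at this
    exact lt_irrefl _ this
  · intro μ hμ hne
    obtain ⟨x, hx, y, hy, rfl⟩ := Finset.mem_add.mp (support_mul F G hμ)
    exact hF.weight_add_lt hG hx hy fun h => hne (by simp_all)

variable [Nontrivial R]

theorem IsUniqueMinWeight.prod {ι : Type*} (s : Finset ι) {F : ι → MvPolynomial σ R}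
    {M : ι → σ →₀ ℕ} (h : ∀ i ∈ s, IsUniqueMinWeight w (F i) (M i)) :
    IsUniqueMinWeight w (∏ i ∈ s, F i) (∑ i ∈ s, M i) := by
  induction s using Finset.cons_induction with
  | empty => exact isUniqueMinWeight_monomial one_ne_zero
  | cons a s ha ih =>
    rw [Finset.prod_cons, Finset.sum_cons]
    exact (h a (Finset.mem_cons_self a s)).mul (ih fun i hi => h i (Finset.mem_cons_of_mem hi))

theorem IsUniqueMinWeight.pow (h : IsUniqueMinWeight w F M) (d : ℕ) :
    IsUniqueMinWeight w (F ^ d) (d • M) := by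
  simpa using IsUniqueMinWeight.prod (Finset.range d) fun _ _ => h

end CommSemiring

theorem IsUniqueMinWeight.units_zsmul [CommRing R] [AddCommMonoid Γ] [PartialOrder Γ]
    {w : σ → Γ} {F : MvPolynomial σ R} {M : σ →₀ ℕ}
    (h : IsUniqueMinWeight w F M) (u : ℤˣ) : IsUniqueMinWeight w ((u : ℤ) • F) M := by
  refine ⟨?_, fun μ hμ => h.2 μ (support_smul hμ)⟩
  rw [coeff_smul]
  rcases Int.units_eq_one_or u with rfl | rfl <;> simpa using h.1

end MvPolynomial

namespace RNC

/-- Truncated subtraction makes the weight vanish for `i + j ≥ n + 2`, where `φ (X (i, j))` is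
arbitrary. -/
def antidiagWeight (n c : ℕ) : ℕ := (n + 2 - c) ^ 2

def varWeight (n : ℕ) (p : Subtype (SubP n)) : ℕ := antidiagWeight n (p.1.1 + p.1.2)

noncomputable def zExp (n : ℕ) (x : ℕ × ℕ) : Subtype (SubP n) →₀ ℕ :=
  if h : SubP n x then Finsupp.single ⟨x, h⟩ 1 else 0

/-- The exponent of `∏_{q < ⌊s/2⌋} z_{s-q,q+1}`, the term of `φ v_s` coming from the reversal;
for odd `s` the index `i = ⌊s/2⌋` gives the diagonal entry `1`. -/
noncomputable def antidiagExp (n s : ℕ) : Subtype (SubP n) →₀ ℕ :=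
  ∑ i : Fin (s - s / 2), zExp n (s - i, i + 1)

theorem zExp_apply (n : ℕ) (x : ℕ × ℕ) (p : Subtype (SubP n)) :
    zExp n x p = if x = p.1 then 1 else 0 := by
  unfold zExp
  split_ifs with hx hxp hxp
  · subst hxp; simp
  · exact Finsupp.single_eq_of_ne fun h => hxp (congrArg Subtype.val h).symm
  · exact absurd (hxp ▸ p.2) hx
  · rfl

theorem weight_zExp_of_lt {n r j : ℕ} (hj : 1 ≤ j) (hjr : j < r) (hr : r ≤ n) :
    weight (varWeight n) (zExp n (r, j)) = antidiagWeight n (r + j) := by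
  unfold zExp
  split_ifs with hx
  · rw [Finsupp.weight_single, one_smul]; rfl
  · have : n + 2 - (r + j) = 0 := by simp only [SubP] at hx; omega
    simp [antidiagWeight, this]

theorem antidiagWeight_ge_tangent {n s : ℕ} (hsn : s ≤ n) (c : ℕ) :
    ((n : ℤ) + 1 - s) ^ 2 - 2 * ((n : ℤ) + 1 - s) * ((c : ℤ) - (s + 1))
      + (if c = s + 1 then 0 else 1) ≤ antidiagWeight n c := by
  unfold antidiagWeight
  rcases le_or_gt c (n + 2) with hc | hc
  · have hcast : ((n + 2 - c : ℕ) : ℤ) = (n : ℤ) + 2 - c := by omega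
    push_cast [hcast]
    split_ifs with hcs
    · nlinarith
    · have : (1 : ℤ) ≤ ((c : ℤ) - (s + 1)) ^ 2 :=
        (one_le_sq_iff_one_le_abs _).mpr (Int.one_le_abs (by omega))
      nlinarith
  · rw [Nat.sub_eq_zero_of_le hc.le, if_neg (by omega)]
    have ha : (1 : ℤ) ≤ (n : ℤ) + 1 - s := by omega
    have hx : (n : ℤ) + 2 - s ≤ (c : ℤ) - (s + 1) := by omega
    nlinarith

variable {k : Type*} [Field k] {n : ℕ}

theorem map_Zent_eq_monomial
    {φ : MvPolynomial (ℕ × ℕ) k →ₐ[k] MvPolynomial (Subtype (SubP n)) k}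
    (hφ : ∀ (p : ℕ × ℕ) (hp : SubP n p), φ (X p) = X ⟨p, hp⟩)
    {r j : ℕ} (hj : 1 ≤ j) (hjr : j ≤ r) (hc : r + j ≤ n + 1) :
    φ (Zent k r j) = monomial (zExp n (r, j)) 1 := by
  rcases hjr.eq_or_lt with rfl | hjr
  · have hx : ¬ SubP n (j, j) := fun h => lt_irrefl _ h.2.1
    simp [Zent, zExp, hx]
  · have hx : SubP n (r, j) := ⟨hj, hjr, by omega, hc⟩
    rw [Zent, if_neg hjr.ne', if_pos hjr, hφ _ hx, zExp, dif_pos hx]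
    rfl

theorem weight_zExp_le_of_mem_support
    {φ : MvPolynomial (ℕ × ℕ) k →ₐ[k] MvPolynomial (Subtype (SubP n)) k}
    (hφ : ∀ (p : ℕ × ℕ) (hp : SubP n p), φ (X p) = X ⟨p, hp⟩)
    (r j : ℕ) {μ : Subtype (SubP n) →₀ ℕ} (hμ : μ ∈ (φ (Zent k r j)).support) :
    weight (varWeight n) (zExp n (r, j)) ≤ weight (varWeight n) μ := by
  by_cases hx : SubP n (r, j)
  · rw [map_Zent_eq_monomial hφ hx.1 hx.2.1.le hx.2.2.2] at hμ
    rw [Finset.mem_singleton.mp (support_monomial_subset hμ)]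
  · simp [zExp, hx]

theorem weight_entry_ge {s i r : ℕ} (hsn : s ≤ n) (hi : i < s - s / 2) (hr : s / 2 + 1 ≤ r)
    (hrs : r ≤ s) (hir : i + 1 ≤ r) :
    (weight (varWeight n) (zExp n (s - i, i + 1)) : ℤ)
      - 2 * ((n : ℤ) + 1 - s) * ((r : ℤ) + (i + 1) - (s + 1))
      + (if r + (i + 1) = s + 1 then 0 else 1)
      ≤ weight (varWeight n) (zExp n (r, i + 1)) := by
  rcases hir.eq_or_lt with hdiag | hir
  · have hrev : s - i = i + 1 := by omega
    have hx : ¬ SubP n (i + 1, i + 1) := fun h => lt_irrefl _ h.2.1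
    rw [hrev, ← hdiag, if_pos (by omega)]
    simp only [zExp, hx, dite_false, map_zero, Nat.cast_zero, Nat.cast_add, Nat.cast_one]
    rw [show ((i : ℤ) + 1 + (i + 1) - (s + 1)) = 0 by omega]
    simp
  · have hrev : weight (varWeight n) (zExp n (s - i, i + 1)) ≤ antidiagWeight n (s + 1) := by
      rcases (show i + 1 ≤ s - i by omega).eq_or_lt with heq | hlt
      · have hx : ¬ SubP n (s - i, i + 1) := fun h => by omega
        simp [zExp, hx]
      · rw [weight_zExp_of_lt (by omega) hlt (by omega)]
        exact le_of_eq (congrArg _ (by omega))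
    have hψ : (antidiagWeight n (s + 1) : ℤ) = ((n : ℤ) + 1 - s) ^ 2 := by
      have : n + 2 - (s + 1) = n + 1 - s := by omega
      rw [antidiagWeight, this]; push_cast [Nat.cast_sub (by omega : s ≤ n + 1)]; ring
    rw [weight_zExp_of_lt (by omega) hir (by omega)]
    have := antidiagWeight_ge_tangent hsn (r + (i + 1))
    push_cast at this ⊢
    zify at hrev
    linarith

theorem sum_weight_antidiag_lt {s : ℕ} (hsn : s ≤ n) (σ : Equiv.Perm (Fin (s - s / 2)))
    (hσ : ∀ i : Fin (s - s / 2), (i : ℕ) + 1 ≤ s / 2 + 1 + (σ i : ℕ)) (hne : σ ≠ Fin.revPerm) :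
    ∑ i : Fin (s - s / 2), weight (varWeight n) (zExp n (s - i, i + 1))
      < ∑ i : Fin (s - s / 2), weight (varWeight n) (zExp n (s / 2 + 1 + σ i, i + 1)) := by
  set x : Fin (s - s / 2) → ℤ := fun i => ((s / 2 + 1 + σ i : ℕ) : ℤ) + (i + 1) - (s + 1)
  set e : Fin (s - s / 2) → ℤ := fun i => if s / 2 + 1 + σ i + (i + 1) = s + 1 then 0 else 1
  have hentry : ∀ i : Fin (s - s / 2),
      (weight (varWeight n) (zExp n (s - i, i + 1)) : ℤ) - 2 * ((n : ℤ) + 1 - s) * x i + e i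
        ≤ weight (varWeight n) (zExp n (s / 2 + 1 + σ i, i + 1)) := fun i =>
    weight_entry_ge hsn i.isLt (by omega) (by have := (σ i).isLt; omega) (hσ i)
  -- The entries picked by `σ` and by the reversal have the same total of indices `row + column`,
  -- so the linear parts of the tangent-line bounds cancel.
  have hperm : ∑ i, ((σ i : ℕ) : ℤ) = ∑ i, ((Fin.revPerm i : ℕ) : ℤ) :=
    (Equiv.sum_comp σ fun j => ((j : ℕ) : ℤ)).trans (Equiv.sum_comp Fin.revPerm _).symm
  have hx : ∑ i, x i = 0 := by
    calc ∑ i, x i = ∑ i, (((σ i : ℕ) : ℤ) + (((i : ℕ) : ℤ) + (s / 2 : ℕ) + 1 - s)) := by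
          refine Finset.sum_congr rfl fun i _ => ?_
          simp only [x]; push_cast; ring
      _ = ∑ i, (((Fin.revPerm i : ℕ) : ℤ) + (((i : ℕ) : ℤ) + (s / 2 : ℕ) + 1 - s)) := by
          rw [Finset.sum_add_distrib, hperm, ← Finset.sum_add_distrib]
      _ = 0 := Finset.sum_eq_zero fun i _ => by
          rw [Fin.revPerm_apply, Fin.val_rev]; have := i.isLt; omega
  have he : 1 ≤ ∑ i, e i := by
    obtain ⟨i, hi⟩ : ∃ i, s / 2 + 1 + σ i + (i + 1) ≠ s + 1 := by
      by_contra! h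
      exact hne (Equiv.ext fun i => Fin.ext <| by
        rw [Fin.revPerm_apply, Fin.val_rev]; have := h i; omega)
    calc (1 : ℤ) = e i := by simp [e, hi]
      _ ≤ ∑ i, e i := Finset.single_le_sum (fun j _ => by simp only [e]; split_ifs <;> norm_num)
          (Finset.mem_univ i)
  have hsum := Finset.sum_le_sum fun i (_ : i ∈ Finset.univ) => hentry i
  rw [Finset.sum_add_distrib, Finset.sum_sub_distrib, ← Finset.mul_sum, hx] at hsum
  zify
  linarith

theorem lt_weight_of_mem_support_map_term
    {φ : MvPolynomial (ℕ × ℕ) k →ₐ[k] MvPolynomial (Subtype (SubP n)) k}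
    (hφ : ∀ (p : ℕ × ℕ) (hp : SubP n p), φ (X p) = X ⟨p, hp⟩)
    {s : ℕ} (hsn : s ≤ n) (σ : Equiv.Perm (Fin (s - s / 2))) (hne : σ ≠ Fin.revPerm) :
    ∀ μ ∈ (φ (∏ i : Fin (s - s / 2), Zent k (s / 2 + 1 + σ i) (i + 1))).support,
      weight (varWeight n) (antidiagExp n s) < weight (varWeight n) μ := by
  intro μ hμ
  by_cases hσ : ∀ i : Fin (s - s / 2), (i : ℕ) + 1 ≤ s / 2 + 1 + (σ i : ℕ)
  · rw [antidiagExp, map_sum]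
    refine (sum_weight_antidiag_lt hsn σ hσ hne).trans_le ?_
    rw [map_prod] at hμ
    exact le_weight_of_mem_support_prod _ _ _
      (fun i _ _ hν => weight_zExp_le_of_mem_support hφ _ _ hν) μ hμ
  · obtain ⟨i, hi⟩ := not_forall.mp hσ
    have hzero : Zent k (s / 2 + 1 + σ i) (i + 1) = 0 := by
      rw [Zent, if_neg (by omega), if_neg (by omega)]
    rw [Finset.prod_eq_zero (Finset.mem_univ i) hzero, map_zero] at hμ
    simp at hμ

theorem map_term_revPerm
    {φ : MvPolynomial (ℕ × ℕ) k →ₐ[k] MvPolynomial (Subtype (SubP n)) k}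
    (hφ : ∀ (p : ℕ × ℕ) (hp : SubP n p), φ (X p) = X ⟨p, hp⟩) {s : ℕ} (hsn : s ≤ n) :
    φ (∏ i : Fin (s - s / 2), Zent k (s / 2 + 1 + Fin.revPerm i) (i + 1))
      = monomial (antidiagExp n s) 1 := by
  rw [map_prod, antidiagExp, monomial_sum_one]
  refine Finset.prod_congr rfl fun i _ => ?_
  have hrow : s / 2 + 1 + (Fin.revPerm i : ℕ) = s - i := by
    rw [Fin.revPerm_apply, Fin.val_rev]; have := i.isLt; omega
  have := i.isLt
  rw [hrow]
  exact map_Zent_eq_monomial hφ (by omega) (by omega) (by omega)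

theorem isUniqueMinWeight_map_vminor
    {φ : MvPolynomial (ℕ × ℕ) k →ₐ[k] MvPolynomial (Subtype (SubP n)) k}
    (hφ : ∀ (p : ℕ × ℕ) (hp : SubP n p), φ (X p) = X ⟨p, hp⟩) {s : ℕ} (hsn : s ≤ n) :
    IsUniqueMinWeight (varWeight n) (φ (vminor k fun p : Fin (s - s / 2) => s / 2 + 1 + (p : ℕ)))
      (antidiagExp n s) := by
  classical
  have hdet : vminor k (fun p : Fin (s - s / 2) => s / 2 + 1 + (p : ℕ))
      = ∑ σ : Equiv.Perm (Fin (s - s / 2)),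
          (Equiv.Perm.sign σ : ℤ) • ∏ i, Zent k (s / 2 + 1 + σ i) (i + 1) := by
    simp [vminor, Matrix.det_apply, Units.smul_def]
  rw [hdet, map_sum, ← Finset.add_sum_erase _ _ (Finset.mem_univ Fin.revPerm)]
  refine IsUniqueMinWeight.add ?_ fun μ hμ => ?_
  · rw [map_zsmul, map_term_revPerm hφ hsn]
    exact (isUniqueMinWeight_monomial one_ne_zero).units_zsmul _
  · obtain ⟨σ, hσ, hμσ⟩ := Finset.mem_biUnion.mp (support_sum hμ)
    rw [map_zsmul] at hμσ
    exact lt_weight_of_mem_support_map_term hφ hsn σ (Finset.ne_of_mem_erase hσ) μ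
      (support_smul hμσ)

theorem sum_antidiagExp (n : ℕ) :
    ∑ s ∈ Finset.Icc 1 n, antidiagExp n s
      = ∑ p ∈ (Finset.range (n + 1) ×ˢ Finset.range (n + 1)).subtype (SubP n),
          Finsupp.single p 1 := by
  ext ⟨⟨a, b⟩, hab⟩
  obtain ⟨hb, hba, ha, habn⟩ := hab
  simp only [antidiagExp, Finsupp.finsetSum_apply, zExp_apply, Finsupp.single_apply]
  have hmem : (⟨(a, b), hb, hba, ha, habn⟩ : Subtype (SubP n))
      ∈ (Finset.range (n + 1) ×ˢ Finset.range (n + 1)).subtype (SubP n) := by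
    simp only [Finset.mem_subtype, Finset.mem_product, Finset.mem_range]; omega
  rw [Finset.sum_ite_eq' _ _ (fun _ => 1), if_pos hmem,
    Finset.sum_eq_single_of_mem (a + b - 1) (Finset.mem_Icc.mpr ⟨by omega, by omega⟩)]
  · rw [Finset.sum_eq_single_of_mem (⟨b - 1, by omega⟩ : Fin _) (Finset.mem_univ _),
      if_pos (by simp only [Prod.mk.injEq]; omega)]
    intro i _ hi
    refine if_neg fun h => hi (Fin.ext ?_)
    simp only [Prod.mk.injEq] at h
    simp only
    omega
  · intro s _ hs
    refine Finset.sum_eq_zero fun i _ => if_neg fun h => hs ?_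
    simp only [Prod.mk.injEq] at h
    omega

theorem isUniqueMinWeight_map_fRNC
    {φ : MvPolynomial (ℕ × ℕ) k →ₐ[k] MvPolynomial (Subtype (SubP n)) k}
    (hφ : ∀ (p : ℕ × ℕ) (hp : SubP n p), φ (X p) = X ⟨p, hp⟩) :
    IsUniqueMinWeight (varWeight n) (φ (fRNC k n))
      (∑ p ∈ (Finset.range (n + 1) ×ˢ Finset.range (n + 1)).subtype (SubP n),
        Finsupp.single p 1) := by
  rw [fRNC, map_prod, ← sum_antidiagExp]
  exact IsUniqueMinWeight.prod _ fun s hs =>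
    isUniqueMinWeight_map_vminor hφ (Finset.mem_Icc.mp hs).2

end RNC

theorem stmt14_general (k : Type*) [Field k] (m : ℕ)
    (φ : MvPolynomial (ℕ × ℕ) k →ₐ[k] MvPolynomial (Subtype (SubP (2 * m))) k)
    (hφ : ∀ (p : ℕ × ℕ) (hp : SubP (2 * m) p), φ (X p) = X ⟨p, hp⟩)
    (d : ℕ) :
    MvPolynomial.coeff
      (∑ p ∈ (Finset.range (2 * m + 1) ×ˢ Finset.range (2 * m + 1)).subtype (SubP (2 * m)),
        Finsupp.single p d)
      (φ (fRNC k (2 * m)) ^ d) ≠ 0 := by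
  have h := (RNC.isUniqueMinWeight_map_fRNC hφ).pow d
  simp only [Finset.smul_sum, Finsupp.smul_single_one] at h
  exact h.1

theorem stmt14 (k : Type*) [Field k] (m : ℕ) (hm : 1 ≤ m)
    (φ : MvPolynomial (ℕ × ℕ) k →ₐ[k] MvPolynomial (Subtype (SubP (2 * m))) k)
    (hφ : ∀ (p : ℕ × ℕ) (hp : SubP (2 * m) p), φ (X p) = X ⟨p, hp⟩)
    (d : ℕ) (hd : 0 < d) :
    MvPolynomial.coeff
      (∑ p ∈ (Finset.range (2 * m + 1) ×ˢ Finset.range (2 * m + 1)).subtype (SubP (2 * m)),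
        Finsupp.single p d)
      (φ (fRNC k (2 * m)) ^ d) ≠ 0 :=
  stmt14_general k m φ hφ d
end

section
/- Let n = 2m. For each s = 1,…,2m let a^{(s)} = (a^{(s)}_1 < ⋯ < a^{(s)}_s) be an increasing sequence of length s in {1,…,2m}. Then the product ∏_{s=1}^{2m} det N_{⌊s/2⌋,⌈s/2⌉}(g, h; a^{(s)}), computed for the generic matrices g and h over P, lies in the ideal power D^{m²}. -/
open MvPolynomial

/-! Write `i = ⌊s/2⌋ ≤ j = ⌈s/2⌉`. Subtracting column `i + t` of `N_{i,j}(g,h;a)` (column `t`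
of `h`) from column `t` (column `t` of `g`) for every `t < i` does not change the determinant,
and afterwards the first `i` columns have entries in `D`, so each term of the Leibniz expansion
lies in `D^i`. The product then lies in `D^(∑ ⌊s/2⌋) = D^(m²)`. -/

namespace Matrix

variable {ι R : Type*} [Fintype ι] [DecidableEq ι] [CommRing R]

theorem det_mem_pow_card_of_cols_mem (I : Ideal R) (M : Matrix ι ι R) (S : Finset ι)
    (hM : ∀ s, ∀ t ∈ S, M s t ∈ I) : M.det ∈ I ^ S.card := by
  rw [det_apply]
  refine Ideal.sum_mem _ fun σ _ => ?_
  rw [Units.smul_def, zsmul_eq_mul, ← Finset.prod_mul_prod_compl S]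
  refine Ideal.mul_mem_left _ _ (Ideal.mul_mem_right _ _ ?_)
  simpa using Ideal.prod_mem_prod fun t ht => hM (σ t) t ht

theorem det_of_sub_cols (M : Matrix ι ι R) (S : Finset ι) (f : ι → ι)
    (hf : ∀ t ∈ S, f t ∉ S) :
    (of fun s t => if t ∈ S then M s t - M s (f t) else M s t).det = M.det := by
  induction S using Finset.induction_on with
  | empty => rfl
  | insert t₀ S ht₀ ih =>
    set A : Matrix ι ι R := of fun s t => if t ∈ S then M s t - M s (f t) else M s t
    have hft₀ : f t₀ ∉ insert t₀ S := hf t₀ (Finset.mem_insert_self t₀ S)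
    have hft₀S : f t₀ ∉ S := fun h => hft₀ (Finset.mem_insert_of_mem h)
    have hne : t₀ ≠ f t₀ := fun h => hft₀ (h ▸ Finset.mem_insert_self t₀ S)
    have hupdate : (of fun s t => if t ∈ insert t₀ S then M s t - M s (f t) else M s t) =
        A.updateCol t₀ fun s => A s t₀ + (-1 : R) • A s (f t₀) := by
      ext s t
      by_cases ht : t = t₀
      · subst ht
        simp [A, ht₀, hft₀S, sub_eq_add_neg]
      · simp [A, ht]
    rw [hupdate, det_updateCol_add_smul_self A hne,
      ih fun t ht h => hf t (Finset.mem_insert_of_mem ht) (Finset.mem_insert_of_mem h)]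

end Matrix

theorem det_Nmat_mem_pow {R : Type*} [CommRing R] {n i j : ℕ} (hij : i ≤ j) (hin : i ≤ n)
    (g h : Matrix (Fin n) (Fin n) R) (a : Fin (i + j) → Fin n) (I : Ideal R)
    (hI : ∀ p q, g p q - h p q ∈ I) : (Nmat i j g h a).det ∈ I ^ i := by
  set S : Finset (Fin (i + j)) := {t | (t : ℕ) < i}
  have hS : S.card = i := by simp [S, Fin.card_filter_val_lt]
  let f (t : Fin (i + j)) : Fin (i + j) := if ht : i + t < i + j then ⟨i + t, ht⟩ else t
  have hf : ∀ t ∈ S, f t ∉ S := by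
    intro t ht
    simp only [S, f, Finset.mem_filter_univ] at ht ⊢
    rw [dif_pos (by omega), Fin.val_mk]
    omega
  have hcols : ∀ s, ∀ t ∈ S,
      (Matrix.of fun s t => if t ∈ S then Nmat i j g h a s t - Nmat i j g h a s (f t)
        else Nmat i j g h a s t) s t ∈ I := by
    intro s t ht
    simp only [S, Finset.mem_filter_univ] at ht
    simpa [S, f, ht, Nmat, show (t : ℕ) < n by omega, show (t : ℕ) < j by omega] using hI _ _
  have := Matrix.det_mem_pow_card_of_cols_mem I _ S hcols
  rwa [hS, Matrix.det_of_sub_cols _ S f hf] at this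

theorem Nat.sum_Icc_div_two (m : ℕ) : ∑ s ∈ Finset.Icc 1 (2 * m), s / 2 = m ^ 2 := by
  induction m with
  | zero => simp
  | succ m ih =>
    rw [show 2 * (m + 1) = 2 * m + 1 + 1 by ring, Finset.sum_Icc_succ_top (by omega),
      Finset.sum_Icc_succ_top (by omega), ih]
    have : (m + 1) ^ 2 = m ^ 2 + 2 * m + 1 := by ring
    omega

theorem stmt16_general (k : Type*) [Field k] (m : ℕ)
    (a : (s : ℕ) → Fin (s / 2 + (s - s / 2)) → Fin (2 * m)) :
    (∏ s ∈ Finset.Icc 1 (2 * m),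
      (Nmat (s / 2) (s - s / 2)
        (Matrix.of fun s t : Fin (2 * m) =>
          (X (Sum.inl (s, t)) :
            MvPolynomial ((Fin (2 * m) × Fin (2 * m)) ⊕ (Fin (2 * m) × Fin (2 * m))) k))
        (Matrix.of fun s t : Fin (2 * m) => X (Sum.inr (s, t))) (a s)).det) ∈
      (Ideal.span (Set.range fun p : Fin (2 * m) × Fin (2 * m) =>
        (X (Sum.inl p) - X (Sum.inr p) :
          MvPolynomial ((Fin (2 * m) × Fin (2 * m)) ⊕ (Fin (2 * m) × Fin (2 * m))) k))) ^
        (m ^ 2) := by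
  rw [← Nat.sum_Icc_div_two m, ← Finset.prod_pow_eq_pow_sum]
  refine Ideal.prod_mem_prod fun s hs => ?_
  obtain ⟨-, hs⟩ := Finset.mem_Icc.mp hs
  exact det_Nmat_mem_pow (by omega) (by omega) _ _ _ _ fun p q => Ideal.subset_span ⟨(p, q), rfl⟩

theorem stmt16 (k : Type*) [Field k] (m : ℕ) (hm : 1 ≤ m)
    (a : (s : ℕ) → Fin (s / 2 + (s - s / 2)) → Fin (2 * m))
    (ha : ∀ s ∈ Finset.Icc 1 (2 * m), StrictMono (a s)) :
    (∏ s ∈ Finset.Icc 1 (2 * m),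
      (Nmat (s / 2) (s - s / 2)
        (Matrix.of fun s t : Fin (2 * m) =>
          (X (Sum.inl (s, t)) :
            MvPolynomial ((Fin (2 * m) × Fin (2 * m)) ⊕ (Fin (2 * m) × Fin (2 * m))) k))
        (Matrix.of fun s t : Fin (2 * m) => X (Sum.inr (s, t))) (a s)).det) ∈
      (Ideal.span (Set.range fun p : Fin (2 * m) × Fin (2 * m) =>
        (X (Sum.inl p) - X (Sum.inr p) :
          MvPolynomial ((Fin (2 * m) × Fin (2 * m)) ⊕ (Fin (2 * m) × Fin (2 * m))) k))) ^
        (m ^ 2) :=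
  stmt16_general k m a
end
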